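/- arXiv:1601.05637 — 10 statements merged into one kernel-verified Lean document; each statement's English description precedes it below -/
import Mathlib

section
/- Let R = [r_{n,k}] be the Riordan array determined by a nonnegative A-sequence (a_n) and Z-sequence (z_n), and let r ≥ 1. If the coefficient matrix J(R) is totally positive of order r (TP_r), then R is TP_r. -/
/-- An infinite real matrix `M` is totally positive of order `r` (TP_r) if every minor of
order `k ≤ r` (determinant of a `k × k` submatrix with rows and columns chosen in
increasing order) is nonnegative. -/
def IsTPOrder (r : ℕ) (M : ℕ → ℕ → ℝ) : Prop :=
  ∀ k : ℕ, k ≤ r → ∀ rows cols : Fin k → ℕ, StrictMono rows → StrictMono cols →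
    0 ≤ (Matrix.of fun i j => M (rows i) (cols j)).det

/-- The coefficient matrix `J(R)` of the Riordan array with `A`-sequence `a` and
`Z`-sequence `z`: column 0 is `z`, and the `(i,j)` entry for `j ≥ 1` is `a (i+1-j)`
(zero when `j > i+1`). -/
def coeffMatrix (a z : ℕ → ℝ) : ℕ → ℕ → ℝ := fun i j =>
  if j = 0 then z i else if j ≤ i + 1 then a (i + 1 - j) else 0

open Finset Matrix

/-!
Row `n + 1` of a Riordan array `R` is row `n` multiplied by `J(R)`: `J(R)` is the production
matrix of `R`. So a minor of `R` avoiding row `0` factors as a product of a `k × m` block of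
earlier rows of `R` with a `m × k` block of `J(R)`, and Cauchy–Binet writes it as a sum of
products of minors of `R` on earlier rows with minors of `J(R)`. Row `0` is `(1, 0, 0, …)`, so a
minor meeting it is either `0` or a smaller minor avoiding row `0`. Induction on the rows used.
-/

section CauchyBinet

variable {R ι : Type*} [CommRing R] [Fintype ι] {k : ℕ}

theorem Matrix.det_mul_eq_sum_prod_mul_det_submatrix [DecidableEq ι] (A : Matrix (Fin k) ι R)
    (B : Matrix ι (Fin k) R) :
    (A * B).det = ∑ g : Fin k → ι, (∏ i, B (g i) i) * (A.submatrix id g).det := by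
  simp only [det_apply', mul_apply, prod_univ_sum, mul_sum, Fintype.piFinset_univ,
    submatrix_apply, id]
  rw [sum_comm]
  refine sum_congr rfl fun g _ => sum_congr rfl fun σ _ => ?_
  rw [prod_mul_distrib]
  ring

/-- The Cauchy–Binet formula. -/
theorem Matrix.det_mul_eq_sum_det_mul_det [LinearOrder ι] (A : Matrix (Fin k) ι R)
    (B : Matrix ι (Fin k) R) :
    (A * B).det = ∑ f : Fin k → ι with StrictMono f,
      (A.submatrix id f).det * (B.submatrix f id).det := by
  set S : Finset (Fin k → ι) := {f | StrictMono f}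
  have hinj : Set.InjOn (fun p : (Fin k → ι) × Equiv.Perm (Fin k) => p.1 ∘ p.2)
      (↑(S ×ˢ (univ : Finset (Equiv.Perm (Fin k)))) : Set _) := by
    rintro ⟨f₁, σ₁⟩ h₁ ⟨f₂, σ₂⟩ h₂ h
    simp only [S, coe_product, coe_filter, mem_univ, true_and, coe_univ, Set.mem_prod,
      Set.mem_ofPred_eq, Set.mem_univ, and_true] at h₁ h₂ h
    have h' : f₁ = f₂ ∘ (σ₂ * σ₁⁻¹) := by
      ext i
      simpa using congrFun h (σ₁⁻¹ i)
    have hf : f₁ = f₂ :=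
      h'.trans (Tuple.unique_monotone (τ := 1) (h' ▸ h₁.monotone) h₂.monotone)
    subst hf
    exact Prod.ext rfl (Equiv.ext fun i => h₁.injective (congrFun h i))
  calc (A * B).det = ∑ g : Fin k → ι, (∏ i, B (g i) i) * (A.submatrix id g).det :=
        det_mul_eq_sum_prod_mul_det_submatrix A B
    _ = ∑ p ∈ S ×ˢ (univ : Finset (Equiv.Perm (Fin k))),
          (∏ i, B (p.1 (p.2 i)) i) * (A.submatrix id (p.1 ∘ p.2)).det := by
        -- every injective `g` is its sorted version composed with a permutation, and a
        -- non-injective `g` repeats a column of `A`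
        refine (sum_of_injOn (fun p : (Fin k → ι) × Equiv.Perm (Fin k) => p.1 ∘ p.2) hinj
          (fun _ _ => mem_univ _) ?_ fun _ _ => rfl).symm
        intro g _ hg
        have hg : ¬ Function.Injective g := by
          intro hinj
          refine hg ⟨⟨g ∘ Tuple.sort g, (Tuple.sort g)⁻¹⟩, ?_, by ext; simp⟩
          simpa [S] using (Tuple.monotone_sort g).strictMono_of_injective
            (hinj.comp (Tuple.sort g).injective)
        obtain ⟨i, j, hij, hne⟩ := Function.not_injective_iff.1 hg
        rw [det_zero_of_column_eq hne fun _ => by simp [hij], mul_zero]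
    _ = ∑ f ∈ S, ∑ σ : Equiv.Perm (Fin k),
          (A.submatrix id f).det * (Equiv.Perm.sign σ * ∏ i, B (f (σ i)) i) := by
        rw [sum_product]
        refine sum_congr rfl fun f _ => sum_congr rfl fun σ _ => ?_
        rw [show A.submatrix id (f ∘ σ) = (A.submatrix id f).submatrix id σ from rfl,
          det_permute']
        ring
    _ = _ := by
        refine sum_congr rfl fun f _ => ?_
        rw [← mul_sum, det_apply' (B.submatrix f id)]
        rfl

theorem Matrix.det_mul_nonneg_of_minors_nonneg [PartialOrder R] [IsOrderedRing R]
    [LinearOrder ι] {A : Matrix (Fin k) ι R} {B : Matrix ι (Fin k) R}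
    (hA : ∀ f : Fin k → ι, StrictMono f → 0 ≤ (A.submatrix id f).det)
    (hB : ∀ f : Fin k → ι, StrictMono f → 0 ≤ (B.submatrix f id).det) :
    0 ≤ (A * B).det := by
  rw [det_mul_eq_sum_det_mul_det]
  exact sum_nonneg fun f hf => by
    have hf : StrictMono f := (mem_filter.1 hf).2
    exact mul_nonneg (hA f hf) (hB f hf)

end CauchyBinet

theorem Matrix.det_succ_eq_mul_of_row_zero {R : Type*} [CommRing R] {k : ℕ}
    (M : Matrix (Fin (k + 1)) (Fin (k + 1)) R) (h : ∀ j, j ≠ 0 → M 0 j = 0) :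
    M.det = M 0 0 * (M.submatrix Fin.succ Fin.succ).det := by
  rw [det_succ_row_zero, Fin.sum_univ_succ,
    sum_eq_zero fun j _ => by simp [h j.succ j.succ_ne_zero]]
  simp

def IsTPOrderOnFirstRows (r m : ℕ) (M : ℕ → ℕ → ℝ) : Prop :=
  ∀ k ≤ r, ∀ rows cols : Fin k → ℕ, StrictMono rows → StrictMono cols →
    (∀ i, rows i < m) → 0 ≤ (Matrix.of fun i j => M (rows i) (cols j)).det

theorem isTPOrder_of_forall_isTPOrderOnFirstRows {r : ℕ} {M : ℕ → ℕ → ℝ}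
    (h : ∀ m, IsTPOrderOnFirstRows r m M) : IsTPOrder r M :=
  fun k hk rows cols hrows hcols =>
    h (univ.sup rows + 1) k hk rows cols hrows hcols fun i =>
      Nat.lt_succ_of_le (le_sup (mem_univ i))

theorem coeffMatrix_zero_right (a z : ℕ → ℝ) (t : ℕ) : coeffMatrix a z t 0 = z t := rfl

theorem coeffMatrix_of_lt (a z : ℕ → ℝ) {t c : ℕ} (h : t < c) :
    coeffMatrix a z t (c + 1) = 0 := by
  rw [coeffMatrix, if_neg c.succ_ne_zero, if_neg (by omega)]

theorem coeffMatrix_add_succ (a z : ℕ → ℝ) (c j : ℕ) :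
    coeffMatrix a z (c + j) (c + 1) = a j := by
  simp [coeffMatrix]

structure IsRiordanArray (a z : ℕ → ℝ) (R : ℕ → ℕ → ℝ) : Prop where
  zero_zero : R 0 0 = 1
  eq_zero_of_lt : ∀ n k, n < k → R n k = 0
  succ_zero : ∀ n, R (n + 1) 0 = ∑ j ∈ range (n + 1), z j * R n j
  succ_succ : ∀ n k, R (n + 1) (k + 1) = ∑ j ∈ range (n + 1), a j * R n (k + j)

namespace IsRiordanArray

variable {a z : ℕ → ℝ} {R : ℕ → ℕ → ℝ}

theorem zero_row_nonneg (hR : IsRiordanArray a z R) (c : ℕ) : 0 ≤ R 0 c := by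
  rcases c with _ | c
  · exact hR.zero_zero.symm ▸ zero_le_one
  · exact (hR.eq_zero_of_lt 0 (c + 1) c.succ_pos).ge

theorem sum_range_mul_eq (hR : IsRiordanArray a z R) {n N : ℕ} (hn : n < N) (g : ℕ → ℝ) :
    ∑ t ∈ range N, R n t * g t = ∑ t ∈ range (n + 1), R n t * g t := by
  refine (sum_subset (range_subset_range.2 hn) fun t ht htn => ?_).symm
  rw [hR.eq_zero_of_lt n t (by simpa using htn), zero_mul]

theorem succ_eq_sum_mul_coeffMatrix (hR : IsRiordanArray a z R) {n N : ℕ} (hn : n < N)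
    (c : ℕ) :
    R (n + 1) c = ∑ t ∈ range N, R n t * coeffMatrix a z t c := by
  rcases c with _ | c
  · rw [hR.sum_range_mul_eq hn, hR.succ_zero]
    simp only [coeffMatrix_zero_right, mul_comm]
  · -- padding the sum to `c + (n + 1)` terms makes its last `n + 1` terms match the `A`-sum
    rw [hR.sum_range_mul_eq hn, ← hR.sum_range_mul_eq (N := c + (n + 1)) (by omega),
      sum_range_add,
      sum_eq_zero fun t ht => by rw [coeffMatrix_of_lt a z (mem_range.1 ht), mul_zero],
      zero_add, hR.succ_succ]
    simp only [coeffMatrix_add_succ, mul_comm]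

theorem det_minor_nonneg_of_rows_pos (hR : IsRiordanArray a z R) {r m : ℕ}
    (hJ : IsTPOrder r (coeffMatrix a z)) (hm : IsTPOrderOnFirstRows r m R) {k : ℕ} (hk : k ≤ r)
    {rows cols : Fin k → ℕ} (hrows : StrictMono rows) (hcols : StrictMono cols)
    (hpos : ∀ i, 0 < rows i) (hle : ∀ i, rows i ≤ m) :
    0 ≤ (Matrix.of fun i j => R (rows i) (cols j)).det := by
  have hfactor : (Matrix.of fun i j => R (rows i) (cols j))
      = (Matrix.of fun i (t : Fin m) => R (rows i - 1) t) *
        Matrix.of fun (t : Fin m) j => coeffMatrix a z t (cols j) := by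
    ext i j
    have hi : rows i - 1 < m := by have := hle i; have := hpos i; omega
    rw [of_apply, ← Nat.sub_add_cancel (hpos i), hR.succ_eq_sum_mul_coeffMatrix hi,
      mul_apply, ← Fin.sum_univ_eq_sum_range]
    rfl
  rw [hfactor]
  refine det_mul_nonneg_of_minors_nonneg (fun f hf => ?_) fun f hf => hJ k hk _ cols hf hcols
  refine hm k hk _ _ (fun i j hij => ?_) hf fun i => ?_
  · have := hrows hij
    have := hpos i
    show rows i - 1 < rows j - 1
    omega
  · have := hle i
    have := hpos i
    show rows i - 1 < m
    omega

theorem isTPOrderOnFirstRows_succ (hR : IsRiordanArray a z R) {r m : ℕ}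
    (hJ : IsTPOrder r (coeffMatrix a z)) (hm : IsTPOrderOnFirstRows r m R) :
    IsTPOrderOnFirstRows r (m + 1) R := by
  rintro (_ | k) hk rows cols hrows hcols hlt
  · simp
  have hle : ∀ i, rows i ≤ m := fun i => Nat.le_of_lt_succ (hlt i)
  by_cases h0 : rows 0 = 0
  · rw [det_succ_eq_mul_of_row_zero]
    · refine mul_nonneg (by rw [of_apply, h0]; exact hR.zero_row_nonneg _) ?_
      exact hR.det_minor_nonneg_of_rows_pos hJ hm (by omega) (hrows.comp Fin.strictMono_succ)
        (hcols.comp Fin.strictMono_succ) (fun i => h0 ▸ hrows i.succ_pos) fun i => hle i.succ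
    · intro j hj
      simp only [of_apply, h0]
      exact hR.eq_zero_of_lt 0 _ ((Nat.zero_le _).trans_lt (hcols (Fin.pos_iff_ne_zero.2 hj)))
  · exact hR.det_minor_nonneg_of_rows_pos hJ hm hk hrows hcols
      (fun i => (Nat.pos_of_ne_zero h0).trans_le (hrows.monotone (Fin.zero_le i))) hle

theorem isTPOrderOnFirstRows (hR : IsRiordanArray a z R) {r : ℕ}
    (hJ : IsTPOrder r (coeffMatrix a z)) (m : ℕ) : IsTPOrderOnFirstRows r m R := by
  induction m with
  | zero =>
    rintro (_ | k) _ rows _ _ _ hlt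
    · simp
    · exact absurd (hlt 0) (Nat.not_lt_zero _)
  | succ m ih => exact hR.isTPOrderOnFirstRows_succ hJ ih

end IsRiordanArray

theorem riordan_TP_of_coeff_TPOrder_general (a z : ℕ → ℝ)
    (r : ℕ) (R : ℕ → ℕ → ℝ)
    (hR00 : R 0 0 = 1)
    (htri : ∀ n k, n < k → R n k = 0)
    (hZ : ∀ n, R (n + 1) 0 = ∑ j ∈ Finset.range (n + 1), z j * R n j)
    (hA : ∀ n k, R (n + 1) (k + 1) = ∑ j ∈ Finset.range (n + 1), a j * R n (k + j))
    (hJ : IsTPOrder r (coeffMatrix a z)) :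
    IsTPOrder r R :=
  isTPOrder_of_forall_isTPOrderOnFirstRows
    ((IsRiordanArray.mk hR00 htri hZ hA).isTPOrderOnFirstRows hJ)

theorem riordan_TP_of_coeff_TPOrder (a z : ℕ → ℝ) (ha : ∀ n, 0 ≤ a n) (hz : ∀ n, 0 ≤ z n)
    (r : ℕ) (hr : 1 ≤ r) (R : ℕ → ℕ → ℝ)
    (hR00 : R 0 0 = 1)
    (htri : ∀ n k, n < k → R n k = 0)
    (hZ : ∀ n, R (n + 1) 0 = ∑ j ∈ Finset.range (n + 1), z j * R n j)
    (hA : ∀ n k, R (n + 1) (k + 1) = ∑ j ∈ Finset.range (n + 1), a j * R n (k + j))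
    (hJ : IsTPOrder r (coeffMatrix a z)) :
    IsTPOrder r R :=
  riordan_TP_of_coeff_TPOrder_general a z r R hR00 htri hZ hA hJ
end

section
/- Let R = [r_{n,k}] be the Riordan array determined by an A-sequence (a_n) and Z-sequence (z_n). If R is totally positive of order 2 (TP_2) and z_n ≥ 0 for all n, then the 0th column (r_{n,0})_{n≥0} of R is log-convex. -/
/-!
Write `r_{n+1,0} = ∑_k z_k r_{n,k}`; by lower triangularity the sum may run over `k ≤ j` for every
`n ≤ j`. For `i < j` the 2 × 2 minors in rows `i < j` and columns `0 ≤ k` give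
`r_{i,k} r_{j,0} ≤ r_{i,0} r_{j,k}`; weighting by `z_k ≥ 0` and summing over `k` yields
`r_{i+1,0} r_{j,0} ≤ r_{i,0} r_{j+1,0}`.
-/

open Finset

theorem IsTPOrder.mul_le_mul_of_lt_of_le {r : ℕ} {M : ℕ → ℕ → ℝ} (hM : IsTPOrder r M)
    (hr : 2 ≤ r) {i i' j j' : ℕ} (hi : i < i') (hj : j ≤ j') :
    M i j' * M i' j ≤ M i j * M i' j' := by
  obtain rfl | hj := hj.eq_or_lt
  · rw [mul_comm]
  have hminor := hM 2 hr ![i, i'] ![j, j'] (strictMono_vecEmpty.vecCons hi)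
    (strictMono_vecEmpty.vecCons hj)
  rw [Matrix.det_fin_two] at hminor
  simp only [Matrix.of_apply, Matrix.cons_val_zero, Matrix.cons_val_one] at hminor
  linarith

theorem sum_range_mul_eq_of_lowerTriangular {R : ℕ → ℕ → ℝ} (htri : ∀ n k, n < k → R n k = 0)
    (f : ℕ → ℝ) {n m : ℕ} (hnm : n < m) :
    ∑ k ∈ range (n + 1), f k * R n k = ∑ k ∈ range m, f k * R n k := by
  refine sum_subset (range_subset_range.2 hnm) fun k _ hk => ?_
  rw [htri n k (by simpa using hk), mul_zero]

theorem riordan_col0_logConvex_of_TP2_general (z : ℕ → ℝ) (hz : ∀ n, 0 ≤ z n)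
    (R : ℕ → ℕ → ℝ)
    (htri : ∀ n k, n < k → R n k = 0)
    (hZ : ∀ n, R (n + 1) 0 = ∑ j ∈ Finset.range (n + 1), z j * R n j)
    (hR : IsTPOrder 2 R) :
    ∀ i j : ℕ, i < j → R (i + 1) 0 * R j 0 ≤ R i 0 * R (j + 1) 0 := by
  intro i j hij
  calc R (i + 1) 0 * R j 0
      = ∑ k ∈ range (j + 1), z k * (R i k * R j 0) := by
        rw [hZ, sum_range_mul_eq_of_lowerTriangular htri z (m := j + 1) (by omega), sum_mul]
        simp only [mul_assoc]
    _ ≤ ∑ k ∈ range (j + 1), z k * (R i 0 * R j k) :=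
        sum_le_sum fun k _ =>
          mul_le_mul_of_nonneg_left (hR.mul_le_mul_of_lt_of_le le_rfl hij k.zero_le) (hz k)
    _ = R i 0 * R (j + 1) 0 := by
        rw [hZ, mul_sum]
        exact sum_congr rfl fun k _ => by ring

theorem riordan_col0_logConvex_of_TP2 (a z : ℕ → ℝ) (hz : ∀ n, 0 ≤ z n)
    (R : ℕ → ℕ → ℝ)
    (hR00 : R 0 0 = 1)
    (htri : ∀ n k, n < k → R n k = 0)
    (hZ : ∀ n, R (n + 1) 0 = ∑ j ∈ Finset.range (n + 1), z j * R n j)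
    (hA : ∀ n k, R (n + 1) (k + 1) = ∑ j ∈ Finset.range (n + 1), a j * R n (k + j))
    (hR : IsTPOrder 2 R) :
    ∀ i j : ℕ, i < j → R (i + 1) 0 * R j 0 ≤ R i 0 * R (j + 1) 0 :=
  riordan_col0_logConvex_of_TP2_general z hz R htri hZ hR
end

section
/- Let a,b,s,t be nonnegative reals with a·s ≥ b and s² ≥ t. Then the sequence of Catalan-like numbers (r_{n,0})_{n≥0} of the recursive matrix R(a,b;s,t) is log-convex. -/
/-!
Row `n + 1` of `R(a,b;s,t)` is row `n` times the tridiagonal production matrix `P` with first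
column `(a, b, 0, …)`, diagonal `s`, superdiagonal `1` and subdiagonal `t`. For a nonnegative
tridiagonal matrix the only 2×2 minors that can be negative are the consecutive diagonal ones,
here `a s - b` and `s² - t`, so `P` is totally positive of order 2. By the Cauchy–Binet formula
every 2×2 minor of two consecutive rows of `R` is then nonnegative, by induction on the row.
Since `r_n r_{n+2} - r_{n+1}² = b (r_{n,0} r_{n+1,1} - r_{n,1} r_{n+1,0})`, the first column is
log-convex at consecutive indices, which for a nonnegative sequence gives log-convexity.
-/

open Finset

section OrderedRing

variable {α : Type*} [CommRing α] [LinearOrder α] [IsStrictOrderedRing α]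

theorem sum_mul_sum_sub_sum_mul_sum_nonneg {ι : Type*} [LinearOrder ι] (S : Finset ι)
    (x y p q : ι → α) (hxy : ∀ k m, k < m → 0 ≤ x k * y m - x m * y k)
    (hpq : ∀ k m, k < m → 0 ≤ p k * q m - p m * q k) :
    0 ≤ (∑ k ∈ S, x k * p k) * (∑ k ∈ S, y k * q k) -
      (∑ k ∈ S, x k * q k) * (∑ k ∈ S, y k * p k) := by
  set D : ι → ι → α := fun k m => p k * q m - p m * q k
  have cauchyBinet : ∑ k ∈ S, ∑ m ∈ S, (x k * y m - x m * y k) * D k m =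
      2 * ((∑ k ∈ S, x k * p k) * (∑ k ∈ S, y k * q k) -
        (∑ k ∈ S, x k * q k) * (∑ k ∈ S, y k * p k)) :=
    calc ∑ k ∈ S, ∑ m ∈ S, (x k * y m - x m * y k) * D k m
        = ∑ k ∈ S, ∑ m ∈ S, (x k * y m * D k m + x m * y k * D m k) := by
          refine sum_congr rfl fun k _ => sum_congr rfl fun m _ => ?_
          simp only [D]; ring
      _ = 2 * ∑ k ∈ S, ∑ m ∈ S, x k * y m * D k m := by
          simp only [sum_add_distrib]
          rw [sum_comm (f := fun k m => x m * y k * D m k)]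
          ring
      _ = _ := by
          rw [sum_mul_sum, sum_mul_sum, ← sum_sub_distrib]
          congr 1
          refine sum_congr rfl fun k _ => ?_
          rw [← sum_sub_distrib]
          refine sum_congr rfl fun m _ => ?_
          simp only [D]; ring
  -- Both factors change sign when `k` and `m` are swapped.
  have hterm : ∀ k m, 0 ≤ (x k * y m - x m * y k) * D k m := by
    intro k m
    rcases lt_trichotomy k m with hkm | rfl | hmk
    · exact mul_nonneg (hxy k m hkm) (hpq k m hkm)
    · simp
    · have hx := hxy m k hmk
      have hp := hpq m k hmk
      exact mul_nonneg_of_nonpos_of_nonpos (by linarith) (by simp only [D]; linarith)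
  have hsum : 0 ≤ ∑ k ∈ S, ∑ m ∈ S, (x k * y m - x m * y k) * D k m :=
    sum_nonneg fun k _ => sum_nonneg fun m _ => hterm k m
  rw [cauchyBinet] at hsum
  exact nonneg_of_mul_nonneg_right hsum two_pos

theorem logConvex_of_sq_le_mul {c : ℕ → α} (hc : ∀ n, 0 ≤ c n)
    (h : ∀ n, c (n + 1) ^ 2 ≤ c n * c (n + 2)) :
    ∀ i j, i < j → c (i + 1) * c j ≤ c i * c (j + 1) := by
  intro i j hij
  induction j, hij using Nat.le_induction with
  | base => simpa [sq] using h i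
  | succ j hij ih =>
    rcases (hc (j + 1)).eq_or_lt with hzero | hpos
    · rw [← hzero, mul_zero]
      exact mul_nonneg (hc i) (hc _)
    · refine le_of_mul_le_mul_right ?_ hpos
      calc c (i + 1) * c (j + 1) * c (j + 1) = c (i + 1) * c (j + 1) ^ 2 := by ring
        _ ≤ c (i + 1) * (c j * c (j + 2)) := mul_le_mul_of_nonneg_left (h j) (hc _)
        _ = c (i + 1) * c j * c (j + 2) := by ring
        _ ≤ c i * c (j + 1) * c (j + 2) := mul_le_mul_of_nonneg_right ih (hc _)
        _ = c i * c (j + 1 + 1) * c (j + 1) := by ring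

end OrderedRing

def productionMatrix (a b s t : ℝ) : ℕ → ℕ → ℝ
  | k, 0 => (if k = 0 then a else 0) + (if k = 1 then b else 0)
  | k, j + 1 => (if k = j then 1 else 0) + (if k = j + 1 then s else 0) +
      (if k = j + 2 then t else 0)

section ProductionMatrix

variable {a b s t : ℝ}

theorem sum_mul_productionMatrix_zero (f : ℕ → ℝ) {N : ℕ} (hN : 2 ≤ N) :
    ∑ k ∈ range N, f k * productionMatrix a b s t k 0 = a * f 0 + b * f 1 := by
  simp [productionMatrix, mul_add, sum_add_distrib, mul_ite, show 0 < N by omega,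
    show 1 < N by omega, mul_comm]

theorem sum_mul_productionMatrix_succ (f : ℕ → ℝ) {N j : ℕ} (hN : j + 3 ≤ N) :
    ∑ k ∈ range N, f k * productionMatrix a b s t k (j + 1) =
      f j + s * f (j + 1) + t * f (j + 2) := by
  simp [productionMatrix, mul_add, sum_add_distrib, mul_ite, show j < N by omega,
    show j + 1 < N by omega, show j + 2 < N by omega, mul_comm]

theorem productionMatrix_nonneg (ha : 0 ≤ a) (hb : 0 ≤ b) (hs : 0 ≤ s) (ht : 0 ≤ t) :
    ∀ k j, 0 ≤ productionMatrix a b s t k j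
  | k, 0 => by simp only [productionMatrix]; split_ifs <;> positivity
  | k, j + 1 => by simp only [productionMatrix]; split_ifs <;> positivity

theorem productionMatrix_eq_zero_of_succ_lt {k j : ℕ} (h : j + 1 < k) :
    productionMatrix a b s t k j = 0 := by
  cases j <;> simp only [productionMatrix] <;> split_ifs <;> first | omega | simp

theorem productionMatrix_eq_zero_of_lt_pred {k j : ℕ} (h : k + 1 < j) :
    productionMatrix a b s t k j = 0 := by
  cases j <;> simp only [productionMatrix] <;> split_ifs <;> first | omega | simp

theorem productionMatrix_minor_nonneg (ha : 0 ≤ a) (hb : 0 ≤ b) (hs : 0 ≤ s) (ht : 0 ≤ t)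
    (hab : b ≤ a * s) (hst : t ≤ s ^ 2) {k m j l : ℕ} (hkm : k < m) (hjl : j < l) :
    0 ≤ productionMatrix a b s t k j * productionMatrix a b s t m l -
      productionMatrix a b s t m j * productionMatrix a b s t k l := by
  have hP := productionMatrix_nonneg ha hb hs ht
  by_cases hmj : j + 1 < m
  · simpa [productionMatrix_eq_zero_of_succ_lt hmj] using mul_nonneg (hP k j) (hP m l)
  by_cases hkl : k + 1 < l
  · simpa [productionMatrix_eq_zero_of_lt_pred hkl] using mul_nonneg (hP k j) (hP m l)
  -- The subtracted product vanishes unless the minor sits on the diagonal.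
  obtain ⟨rfl, rfl, rfl⟩ : j = k ∧ m = k + 1 ∧ l = k + 1 := by omega
  rcases j with _ | j
  · simpa [productionMatrix] using hab
  · simpa [productionMatrix, sq, show j + 1 + 1 ≠ j by omega] using hst

end ProductionMatrix

structure IsRecursiveMatrix (a b s t : ℝ) (R : ℕ → ℕ → ℝ) : Prop where
  zero_zero : R 0 0 = 1
  eq_zero_of_lt : ∀ n k, n < k → R n k = 0
  succ_zero : ∀ n, R (n + 1) 0 = a * R n 0 + b * R n 1
  succ_succ : ∀ n k, R (n + 1) (k + 1) = R n k + s * R n (k + 1) + t * R n (k + 2)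

namespace IsRecursiveMatrix

variable {a b s t : ℝ} {R : ℕ → ℕ → ℝ}

theorem succ_eq_sum (hR : IsRecursiveMatrix a b s t R) (n : ℕ) {j N : ℕ} (hN : j + 2 ≤ N) :
    R (n + 1) j = ∑ k ∈ range N, R n k * productionMatrix a b s t k j := by
  rcases j with _ | j
  · rw [sum_mul_productionMatrix_zero _ hN, hR.succ_zero]
  · rw [sum_mul_productionMatrix_succ _ hN, hR.succ_succ]

theorem nonneg (hR : IsRecursiveMatrix a b s t R) (ha : 0 ≤ a) (hb : 0 ≤ b) (hs : 0 ≤ s)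
    (ht : 0 ≤ t) (n k : ℕ) : 0 ≤ R n k := by
  induction n generalizing k with
  | zero =>
    rcases k with _ | k
    · simp [hR.zero_zero]
    · simp [hR.eq_zero_of_lt 0 (k + 1) k.succ_pos]
  | succ n ih =>
    rw [hR.succ_eq_sum n le_rfl]
    exact sum_nonneg fun i _ => mul_nonneg (ih i) (productionMatrix_nonneg ha hb hs ht i k)

theorem minor_nonneg (hR : IsRecursiveMatrix a b s t R) (ha : 0 ≤ a) (hb : 0 ≤ b) (hs : 0 ≤ s)
    (ht : 0 ≤ t) (hab : b ≤ a * s) (hst : t ≤ s ^ 2) (n : ℕ) {k m : ℕ} (hkm : k < m) :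
    0 ≤ R n k * R (n + 1) m - R n m * R (n + 1) k := by
  induction n generalizing k m with
  | zero =>
    rw [hR.eq_zero_of_lt 0 m (by omega), zero_mul, sub_zero]
    exact mul_nonneg (hR.nonneg ha hb hs ht 0 k) (hR.nonneg ha hb hs ht 1 m)
  | succ n ih =>
    have hk : k + 2 ≤ m + 2 := by omega
    rw [hR.succ_eq_sum n hk, hR.succ_eq_sum n le_rfl, hR.succ_eq_sum (n + 1) hk,
      hR.succ_eq_sum (n + 1) le_rfl]
    exact sum_mul_sum_sub_sum_mul_sum_nonneg _ _ _ _ _ (fun i j hij => ih hij)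
      fun i j hij => productionMatrix_minor_nonneg ha hb hs ht hab hst hij hkm

theorem sq_le_mul_zero (hR : IsRecursiveMatrix a b s t R) (ha : 0 ≤ a) (hb : 0 ≤ b)
    (hs : 0 ≤ s) (ht : 0 ≤ t) (hab : b ≤ a * s) (hst : t ≤ s ^ 2) (n : ℕ) :
    R (n + 1) 0 ^ 2 ≤ R n 0 * R (n + 2) 0 := by
  have hminor := hR.minor_nonneg ha hb hs ht hab hst n zero_lt_one
  have hdet : R n 0 * R (n + 2) 0 - R (n + 1) 0 ^ 2 =
      b * (R n 0 * R (n + 1) 1 - R n 1 * R (n + 1) 0) := by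
    linear_combination R n 0 * hR.succ_zero (n + 1) - R (n + 1) 0 * hR.succ_zero n
  rw [← sub_nonneg, hdet]
  exact mul_nonneg hb hminor

end IsRecursiveMatrix

theorem catalanLike_logConvex (a b s t : ℝ) (ha : 0 ≤ a) (hb : 0 ≤ b) (hs : 0 ≤ s)
    (ht : 0 ≤ t) (h1 : a * s ≥ b) (h2 : s ^ 2 ≥ t)
    (R : ℕ → ℕ → ℝ)
    (hR00 : R 0 0 = 1)
    (htri : ∀ n k, n < k → R n k = 0)
    (hcol0 : ∀ n, R (n + 1) 0 = a * R n 0 + b * R n 1)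
    (hrec : ∀ n k, R (n + 1) (k + 1) = R n k + s * R n (k + 1) + t * R n (k + 2)) :
    ∀ i j : ℕ, i < j → R (i + 1) 0 * R j 0 ≤ R i 0 * R (j + 1) 0 := by
  have hR : IsRecursiveMatrix a b s t R := ⟨hR00, htri, hcol0, hrec⟩
  exact logConvex_of_sq_le_mul (fun n => hR.nonneg ha hb hs ht n 0)
    (hR.sq_le_mul_zero ha hb hs ht h1 h2)
end

section
/- Let a,b,s,t be nonnegative reals with s² ≥ 4t and a·(s+√(s²−4t))/2 ≥ b. Then the recursive matrix R(a,b;s,t) is totally positive (TP). -/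
/-!
The rows of `R` satisfy `R (n + 1) = R n * J` for the tridiagonal production matrix `J`, and
`R 0` is the first unit vector, so by induction on the rows (Laplace expansion along row `0`)
it suffices that right multiplication by `J` keeps every maximal minor of a finite family of
rows nonnegative. With `r ≥ r'` the roots of `x² - s x + t`, `J = U L` where `U` is upper
bidiagonal with diagonal `(a - b / r, r, r, …)` and superdiagonal `1`, and `L` is lower
bidiagonal with diagonal `1` and subdiagonal `(b / r, r', r', …)`; the hypothesis `a r ≥ b`
makes all these entries nonnegative. Right multiplication by a nonnegative bidiagonal matrix
expands, by multilinearity in the columns, into a nonnegative combination of minors whose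
column indices are weakly increasing, each of which is zero or a minor of the original family.
-/

/-- An infinite real matrix `M` is totally positive (TP) if every minor
(determinant of a square submatrix with rows and columns chosen in
increasing order) is nonnegative. -/
def IsTP (M : ℕ → ℕ → ℝ) : Prop :=
  ∀ k : ℕ, ∀ rows cols : Fin k → ℕ, StrictMono rows → StrictMono cols →
    0 ≤ (Matrix.of fun i j => M (rows i) (cols j)).det

open Matrix

theorem Matrix.det_of_add_eq_sum_piecewise {n R : Type*} [Fintype n] [DecidableEq n]
    [CommRing R] (f g : n → n → R) :
    (of fun i j => f i j + g i j).det =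
      ∑ S : Finset n, (of fun i j => if j ∈ S then f i j else g i j).det := by
  calc (of fun i j => f i j + g i j).det
      = detRowAlternating ((fun j i => f i j) + fun j i => g i j) := by
        rw [← det_transpose]; rfl
    _ = ∑ S : Finset n, detRowAlternating (S.piecewise (fun j i => f i j) fun j i => g i j) :=
        AlternatingMap.map_add_univ _ _ _
    _ = _ := Finset.sum_congr rfl fun S _ => by
        rw [← det_transpose]
        congr 1
        ext i j
        by_cases hj : i ∈ S <;> simp [Finset.piecewise, hj]

theorem Matrix.det_succ_row_zero_of_eq_zero {R : Type*} [CommRing R] {k : ℕ}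
    (M : Matrix (Fin (k + 1)) (Fin (k + 1)) R) (h : ∀ j : Fin k, M 0 j.succ = 0) :
    M.det = M 0 0 * (M.submatrix Fin.succ Fin.succ).det := by
  simp [det_succ_row_zero, Fin.sum_univ_succ, h]

def MaxMinorsNonneg {k : ℕ} (X : Fin k → ℕ → ℝ) : Prop :=
  ∀ c : Fin k → ℕ, StrictMono c → 0 ≤ (of fun i j => X i (c j)).det

namespace MaxMinorsNonneg

variable {k : ℕ} {X : Fin k → ℕ → ℝ}

theorem det_nonneg_of_monotone (hX : MaxMinorsNonneg X) {c : Fin k → ℕ} (hc : Monotone c) :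
    0 ≤ (of fun i j => X i (c j)).det := by
  by_cases hinj : Function.Injective c
  · exact hX c (hc.strictMono_of_injective hinj)
  · obtain ⟨j, j', hcj, hjj'⟩ : ∃ j j', c j = c j' ∧ j ≠ j' := by
      simpa [Function.Injective] using hinj
    exact (det_zero_of_column_eq hjj' fun i => by simp [hcj]).ge

/-- Right multiplication by the matrix with entries `α m` at `(m, m)` and `β m` at `(φ m, m)`.
The condition on `φ` keeps the column indices of every term of the multilinear expansion
weakly increasing. -/
theorem bidiagonal (hX : MaxMinorsNonneg X) {α β : ℕ → ℝ} (hα : ∀ m, 0 ≤ α m)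
    (hβ : ∀ m, 0 ≤ β m) {φ : ℕ → ℕ} (hφ : ∀ m m', m < m' → max m (φ m) ≤ min m' (φ m')) :
    MaxMinorsNonneg fun i m => α m * X i m + β m * X i (φ m) := by
  intro c hc
  rw [det_of_add_eq_sum_piecewise]
  refine Finset.sum_nonneg fun S _ => ?_
  let v j := if j ∈ S then α (c j) else β (c j)
  let d j := if j ∈ S then c j else φ (c j)
  have hd : Monotone d := monotone_iff_forall_lt.2 fun j j' hjj' => by
    have := hφ _ _ (hc hjj')
    simp only [d]
    split_ifs <;> omega
  have hterm : (of fun i j => if j ∈ S then α (c j) * X i (c j) else β (c j) * X i (φ (c j)))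
      = of fun i j => v j * X i (d j) := by
    ext i j
    by_cases hj : j ∈ S <;> simp [v, d, hj]
  have hscale := det_mul_row v (of fun i j => X i (d j))
  simp only [of_apply] at hscale
  rw [hterm, hscale]
  refine mul_nonneg (Finset.prod_nonneg fun j _ => ?_) (hX.det_nonneg_of_monotone hd)
  by_cases hj : j ∈ S <;> simp [v, hj, hα, hβ]

end MaxMinorsNonneg

/-- `x ↦ x J` for the tridiagonal production matrix `J` of `R(a, b; s, t)`. -/
def productionStep (a b s t : ℝ) (x : ℕ → ℝ) : ℕ → ℝ
  | 0 => a * x 0 + b * x 1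
  | m + 1 => x m + s * x (m + 1) + t * x (m + 2)

theorem MaxMinorsNonneg.map_productionStep {k : ℕ} {X : Fin k → ℕ → ℝ}
    (hX : MaxMinorsNonneg X) {d c r r' : ℝ} (hd : 0 ≤ d) (hc : 0 ≤ c) (hr : 0 ≤ r)
    (hr' : 0 ≤ r') :
    MaxMinorsNonneg fun i => productionStep (d + c) (c * r) (r + r') (r * r') (X i) := by
  have hU := hX.bidiagonal (α := fun m => if m = 0 then d else r)
    (β := fun m => if m = 0 then 0 else 1) (φ := (· - 1))
    (fun m => by split_ifs <;> assumption) (fun m => by split_ifs <;> norm_num)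
    (fun m m' hm => by omega)
  have hUL := hU.bidiagonal (α := fun _ => 1) (β := fun m => if m = 0 then c else r')
    (φ := (· + 1)) (fun _ => zero_le_one) (fun m => by split_ifs <;> assumption)
    (fun m m' hm => by omega)
  convert hUL using 2 with i
  funext m
  cases m <;> simp [productionStep] <;> ring

theorem isTP_of_row_succ_eq {R : ℕ → ℕ → ℝ} {F : (ℕ → ℝ) → ℕ → ℝ}
    (hF : ∀ k (X : Fin k → ℕ → ℝ), MaxMinorsNonneg X → MaxMinorsNonneg fun i => F (X i))
    (hR0 : 0 ≤ R 0 0) (hR0succ : ∀ m, R 0 (m + 1) = 0) (hR : ∀ n, R (n + 1) = F (R n)) :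
    IsTP R := by
  suffices h : ∀ k (rows : Fin k → ℕ), StrictMono rows → MaxMinorsNonneg fun i => R (rows i) from
    fun k rows cols hrows hcols => h k rows hrows cols hcols
  intro k
  induction k with
  | zero => intro rows _ cols _; simp
  | succ k ihk =>
    suffices h : ∀ n (rows : Fin (k + 1) → ℕ), StrictMono rows → rows 0 = n →
        MaxMinorsNonneg fun i => R (rows i) from fun rows hrows => h _ rows hrows rfl
    intro n
    induction n with
    | zero =>
      intro rows hrows hrows0 cols hcols
      rw [det_succ_row_zero_of_eq_zero _ fun j => ?_]
      · have hR0c : 0 ≤ R 0 (cols 0) := by cases cols 0 <;> simp [hR0, hR0succ]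
        exact mul_nonneg (by simpa [hrows0] using hR0c)
          (ihk _ (hrows.comp Fin.strictMono_succ) _ (hcols.comp Fin.strictMono_succ))
      · obtain ⟨m, hm⟩ := Nat.exists_eq_add_one.2 ((Nat.zero_le _).trans_lt (hcols j.succ_pos))
        simp [hrows0, hm, hR0succ]
    | succ n ihn =>
      intro rows hrows hrows0
      have hpos : ∀ i, 1 ≤ rows i := fun i => by
        have := hrows.monotone (Fin.zero_le i)
        omega
      have hprev := ihn (fun i => rows i - 1)
        (fun i j hij => by
          show rows i - 1 < rows j - 1
          have := hrows hij
          have := hpos i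
          omega)
        (by simp [hrows0])
      convert hF _ _ hprev using 2 with i
      rw [← hR, Nat.sub_add_cancel (hpos i)]

theorem recursiveMatrix_TP (a b s t : ℝ) (ha : 0 ≤ a) (hb : 0 ≤ b) (hs : 0 ≤ s)
    (ht : 0 ≤ t) (h1 : s ^ 2 ≥ 4 * t) (h2 : a * (s + Real.sqrt (s ^ 2 - 4 * t)) / 2 ≥ b)
    (R : ℕ → ℕ → ℝ)
    (hR00 : R 0 0 = 1)
    (htri : ∀ n k, n < k → R n k = 0)
    (hcol0 : ∀ n, R (n + 1) 0 = a * R n 0 + b * R n 1)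
    (hrec : ∀ n k, R (n + 1) (k + 1) = R n k + s * R n (k + 1) + t * R n (k + 2)) :
    IsTP R := by
  obtain ⟨d, c, r, r', hd, hc, hr, hr', rfl, rfl, rfl, rfl⟩ : ∃ d c r r' : ℝ,
      0 ≤ d ∧ 0 ≤ c ∧ 0 ≤ r ∧ 0 ≤ r' ∧ a = d + c ∧ b = c * r ∧ s = r + r' ∧ t = r * r' := by
    set e := Real.sqrt (s ^ 2 - 4 * t)
    have he2 : e ^ 2 = s ^ 2 - 4 * t := Real.sq_sqrt (by linarith)
    have hes : e ≤ s := Real.sqrt_le_iff.2 ⟨hs, by linarith⟩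
    set r := (s + e) / 2
    have hbr : b ≤ a * r := by simp only [r]; linarith
    obtain ⟨hca, hcr⟩ : b / r ≤ a ∧ b / r * r = b := by
      rcases (show 0 ≤ r by positivity).eq_or_lt with h | h
      · rw [← h] at hbr ⊢
        simp only [div_zero, mul_zero] at hbr ⊢
        constructor <;> linarith
      · exact ⟨(div_le_iff₀ h).2 hbr, div_mul_cancel₀ b h.ne'⟩
    refine ⟨a - b / r, b / r, r, (s - e) / 2, by linarith, by positivity, by positivity,
      by linarith, by ring, hcr.symm, by ring, by linear_combination he2 / 4⟩
  refine isTP_of_row_succ_eq (fun k X hX => hX.map_productionStep hd hc hr hr') (by simp [hR00])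
    (fun m => htri 0 (m + 1) m.succ_pos) fun n => funext fun m => ?_
  cases m
  · exact hcol0 n
  · exact hrec n _
end

section
/- Let a,b,r,s,t be nonnegative reals and let J be the infinite Jacobi matrix with J_{0,0}=a, J_{1,0}=b, J_{i,i}=s for i≥1, J_{i,i+1}=r for i≥0, J_{i,i-1}=t for i≥2, and all other entries 0. Then J is totally positive of order 2 (TP_2) if and only if a·s ≥ b·r and s² ≥ r·t. -/
/-- The Jacobi matrix with `J 0 0 = a`, `J 1 0 = b`, diagonal `s` from row 1 on,
superdiagonal `r`, and subdiagonal `t` from row 2 on. -/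
def jacobiMatrix (a b r s t : ℝ) : ℕ → ℕ → ℝ := fun i j =>
  if i = 0 ∧ j = 0 then a
  else if i = 1 ∧ j = 0 then b
  else if i = j ∧ 1 ≤ i then s
  else if j = i + 1 then r
  else if i = j + 1 ∧ 2 ≤ i then t
  else 0

lemma strictMono_vecCons_pair {i i' : ℕ} (h : i < i') : StrictMono ![i, i'] :=
  Fin.strictMono_iff_lt_succ.mpr fun k => by fin_cases k; simpa using h

theorem isTPOrder_two_iff (M : ℕ → ℕ → ℝ) :
    IsTPOrder 2 M ↔ (∀ i j, 0 ≤ M i j) ∧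
      ∀ ⦃i i' j j'⦄, i < i' → j < j' → M i j' * M i' j ≤ M i j * M i' j' := by
  constructor
  · intro h
    refine ⟨fun i j => ?_, fun i i' j j' hi hj => ?_⟩
    · simpa using h 1 (by norm_num) ![i] ![j] (Subsingleton.strictMono _)
        (Subsingleton.strictMono _)
    · have hdet := h 2 le_rfl ![i, i'] ![j, j'] (strictMono_vecCons_pair hi)
        (strictMono_vecCons_pair hj)
      simpa [Matrix.det_fin_two, sub_nonneg] using hdet
  · rintro ⟨hentry, hminor⟩ k hk rows cols hrows hcols
    interval_cases k
    · simp
    · simpa [Matrix.det_fin_one] using hentry _ _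
    · rw [Matrix.det_fin_two, sub_nonneg]
      exact hminor (hrows Fin.zero_lt_one) (hcols Fin.zero_lt_one)

def IsTridiagonal (M : ℕ → ℕ → ℝ) : Prop :=
  ∀ i j, M i j ≠ 0 → j ≤ i + 1 ∧ i ≤ j + 1

theorem IsTridiagonal.isTPOrder_two_iff {M : ℕ → ℕ → ℝ} (hM : IsTridiagonal M)
    (hnonneg : ∀ i j, 0 ≤ M i j) :
    IsTPOrder 2 M ↔ ∀ i, M i (i + 1) * M (i + 1) i ≤ M i i * M (i + 1) (i + 1) := by
  rw [_root_.isTPOrder_two_iff]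
  refine ⟨fun h i => h.2 (Nat.lt_succ_self i) (Nat.lt_succ_self i), fun h => ⟨hnonneg, ?_⟩⟩
  intro i i' j j' hi hj
  rcases eq_or_ne (M i j' * M i' j) 0 with hanti | hanti
  · rw [hanti]
    exact mul_nonneg (hnonneg i j) (hnonneg i' j')
  · obtain ⟨hij', hi'j⟩ := mul_ne_zero_iff.mp hanti
    have := hM _ _ hij'
    have := hM _ _ hi'j
    obtain ⟨rfl, rfl, rfl⟩ : i = j ∧ i' = i + 1 ∧ j' = i + 1 := by omega
    exact h i

section jacobiMatrix

variable (a b r s t : ℝ)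

theorem jacobiMatrix_nonneg (ha : 0 ≤ a) (hb : 0 ≤ b) (hr : 0 ≤ r) (hs : 0 ≤ s) (ht : 0 ≤ t)
    (i j : ℕ) : 0 ≤ jacobiMatrix a b r s t i j := by
  unfold jacobiMatrix
  split_ifs <;> first | assumption | exact le_rfl

theorem jacobiMatrix_isTridiagonal : IsTridiagonal (jacobiMatrix a b r s t) := by
  intro i j h
  unfold jacobiMatrix at h
  split_ifs at h <;> first | omega | exact absurd rfl h

@[simp] theorem jacobiMatrix_zero_zero : jacobiMatrix a b r s t 0 0 = a := rfl

@[simp] theorem jacobiMatrix_one_zero : jacobiMatrix a b r s t 1 0 = b := rfl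

@[simp] theorem jacobiMatrix_self_succ (i : ℕ) : jacobiMatrix a b r s t i (i + 1) = r := by
  simp [jacobiMatrix]

@[simp] theorem jacobiMatrix_succ_succ (i : ℕ) : jacobiMatrix a b r s t (i + 1) (i + 1) = s := by
  simp [jacobiMatrix]

@[simp] theorem jacobiMatrix_add_two_succ (i : ℕ) :
    jacobiMatrix a b r s t (i + 2) (i + 1) = t := by
  simp [jacobiMatrix]

end jacobiMatrix

theorem jacobi_TP2_iff (a b r s t : ℝ) (ha : 0 ≤ a) (hb : 0 ≤ b) (hr : 0 ≤ r)
    (hs : 0 ≤ s) (ht : 0 ≤ t) :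
    IsTPOrder 2 (jacobiMatrix a b r s t) ↔ a * s ≥ b * r ∧ s ^ 2 ≥ r * t := by
  rw [(jacobiMatrix_isTridiagonal a b r s t).isTPOrder_two_iff
    (jacobiMatrix_nonneg a b r s t ha hb hr hs ht)]
  refine ⟨fun h => ⟨?_, ?_⟩, ?_⟩
  · simpa [mul_comm] using h 0
  · simpa [sq, mul_comm] using h 1
  · rintro ⟨h0, h1⟩ (_ | i)
    · simpa [mul_comm] using h0
    · simpa [sq, mul_comm] using h1
end

section
/- Let R be a quasi-consistent Riordan array, i.e., the Riordan array determined by a nonnegative A-sequence (a_n) and Z-sequence (z_n) with z_n = a_{n+1} for all n, and let r ≥ 1. If (a_n) is a Pólya frequency sequence of order r (PF_r), then R is totally positive of order r (TP_r). -/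
/-- The Toeplitz matrix `[a_{i-j}]` of a sequence `a` (with `a m = 0` for `m < 0`). -/
def toeplitz (a : ℕ → ℝ) : ℕ → ℕ → ℝ := fun i j => if j ≤ i then a (i - j) else 0

/-- A nonnegative sequence is a Pólya frequency sequence of order `r` (PF_r)
if its Toeplitz matrix is TP_r. -/
def IsPFOrder (r : ℕ) (a : ℕ → ℝ) : Prop := IsTPOrder r (toeplitz a)

/-!
Row `n + 1` of `R` is row `n` times the production matrix `P j c = a (j + 1 - c)`, i.e. the
Toeplitz matrix of `a` with its top row removed; quasi-consistency is exactly what makes the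
`Z`-column fit this pattern. `P` is TP_r as a row-shifted copy of the Toeplitz matrix. A minor of
`R` using row `0 = (1, 0, 0, …)` expands to a smaller minor, and a minor avoiding row `0` factors,
by Cauchy–Binet, into sums of products of minors of `P` and minors of `R` with every row index
lowered by one. Induction on the order plus the sum of the row indices concludes.
-/

open Finset

theorem Tuple.sort_comp_perm_of_strictMono {α : Type*} [LinearOrder α] {n : ℕ} {g : Fin n → α}
    (hg : StrictMono g) (σ : Equiv.Perm (Fin n)) : Tuple.sort (g ∘ σ) = σ⁻¹ := by
  refine (Tuple.eq_sort_iff.2 ⟨?_, fun i j hij h => ?_⟩).symm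
  · simpa [Function.comp_def] using hg.monotone
  · exact absurd (by simpa using hg.injective h) hij.ne

namespace Matrix

variable {R : Type*} [CommRing R] {k N : ℕ}

theorem det_mul_eq_sum_prod_mul_det (A : Matrix (Fin k) (Fin N) R)
    (B : Matrix (Fin N) (Fin k) R) :
    (A * B).det = ∑ f : Fin k → Fin N, (∏ i, A i (f i)) * (B.submatrix f id).det := by
  have hAB : A * B = fun i => ∑ l, A i l • B l := by
    ext i j
    simp [mul_apply]
  rw [det, hAB, ← AlternatingMap.coe_multilinearMap, MultilinearMap.map_sum]
  refine sum_congr rfl fun f _ => ?_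
  rw [MultilinearMap.map_smul_univ, smul_eq_mul]
  rfl

/-- The Cauchy–Binet formula. -/
theorem det_mul_eq_sum_strictMono (A : Matrix (Fin k) (Fin N) R)
    (B : Matrix (Fin N) (Fin k) R) :
    (A * B).det =
      ∑ g ∈ univ.filter StrictMono, (A.submatrix id g).det * (B.submatrix g id).det := by
  have hinj : ∑ f : Fin k → Fin N, (∏ i, A i (f i)) * (B.submatrix f id).det
      = ∑ f ∈ univ.filter Function.Injective, (∏ i, A i (f i)) * (B.submatrix f id).det := by
    refine (sum_filter_of_ne fun f _ hf => ?_).symm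
    by_contra hnot
    obtain ⟨i, j, hij, hne⟩ : ∃ i j, f i = f j ∧ i ≠ j := by
      simpa [Function.Injective] using hnot
    exact hf (by rw [det_zero_of_row_eq hne (by ext; simp [hij]), mul_zero])
  have hperm : ∀ g : Fin k → Fin N, (A.submatrix id g).det * (B.submatrix g id).det
      = ∑ σ : Equiv.Perm (Fin k), (∏ i, A i ((g ∘ σ) i)) * (B.submatrix (g ∘ σ) id).det := by
    intro g
    rw [← det_transpose, det_apply', sum_mul]
    refine sum_congr rfl fun σ _ => ?_
    rw [show B.submatrix (g ∘ σ) id = (B.submatrix g id).submatrix σ id from rfl, det_permute]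
    simp only [transpose_apply, submatrix_apply, id, Function.comp_apply]
    ring
  rw [det_mul_eq_sum_prod_mul_det, hinj, sum_congr rfl fun g _ => hperm g, ← sum_product']
  symm
  -- an injective `f` is `g ∘ σ` for a unique strictly monotone `g` and permutation `σ`
  refine sum_nbij' (fun p => p.1 ∘ p.2) (fun f => (f ∘ Tuple.sort f, (Tuple.sort f)⁻¹))
    ?_ ?_ ?_ ?_ fun _ _ => rfl
  · simp only [mem_product, mem_filter, mem_univ, true_and, and_true]
    exact fun p hp => hp.injective.comp p.2.injective
  · simp only [mem_product, mem_filter, mem_univ, true_and, and_true]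
    exact fun f hf => (Tuple.monotone_sort f).strictMono_of_injective (hf.comp (Equiv.injective _))
  · simp only [mem_product, mem_filter, mem_univ, true_and, and_true]
    intro p hp
    rw [Tuple.sort_comp_perm_of_strictMono hp]
    ext <;> simp
  · intro f _
    ext
    simp

theorem det_mul_nonneg_of_minors_nonneg_s9 [PartialOrder R] [IsOrderedRing R]
    (A : Matrix (Fin k) (Fin N) R) (B : Matrix (Fin N) (Fin k) R)
    (hA : ∀ g : Fin k → Fin N, StrictMono g → 0 ≤ (A.submatrix id g).det)
    (hB : ∀ g : Fin k → Fin N, StrictMono g → 0 ≤ (B.submatrix g id).det) :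
    0 ≤ (A * B).det := by
  rw [det_mul_eq_sum_strictMono]
  exact sum_nonneg fun g hg => mul_nonneg (hA g (mem_filter.1 hg).2) (hB g (mem_filter.1 hg).2)

end Matrix

theorem IsTPOrder.comp_succ_rows {r : ℕ} {M : ℕ → ℕ → ℝ} (h : IsTPOrder r M) :
    IsTPOrder r (fun i j => M (i + 1) j) :=
  fun k hk rows cols hrows hcols =>
    h k hk (rows · + 1) cols (fun _ _ hij => Nat.succ_lt_succ (hrows hij)) hcols

section RowRecurrence

variable {r : ℕ} {P R : ℕ → ℕ → ℝ}

theorem sum_range_succ_mul_eq_sum_range_mul (htri : ∀ n k, n < k → R n k = 0) {n N : ℕ}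
    (hN : n < N) (v : ℕ → ℝ) :
    ∑ j ∈ range (n + 1), R n j * v j = ∑ j ∈ range N, R n j * v j :=
  sum_subset (range_subset_range.2 hN) fun j _ hj => by
    rw [htri n j (by simpa using hj), zero_mul]

theorem det_submatrix_of_rows_zero_eq_zero (hR00 : R 0 0 = 1) (htri : ∀ n k, n < k → R n k = 0)
    {k : ℕ} (rows cols : Fin (k + 1) → ℕ) (hcols : StrictMono cols) (h0 : rows 0 = 0) :
    ((Matrix.of R).submatrix rows cols).det =
      if cols 0 = 0 then ((Matrix.of R).submatrix (rows ∘ Fin.succ) (cols ∘ Fin.succ)).det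
      else 0 := by
  rw [Matrix.det_succ_row_zero, sum_eq_single 0]
  · split_ifs with hc0
    · simp [h0, hc0, hR00, Matrix.submatrix_submatrix]
    · simp [h0, htri 0 (cols 0) (Nat.pos_of_ne_zero hc0)]
  · intro j _ hj
    simp [h0, htri 0 (cols j) ((Nat.zero_le _).trans_lt (hcols (Fin.pos_of_ne_zero hj)))]
  · simp

theorem submatrix_eq_mul_of_row_succ_eq_sum (htri : ∀ n k, n < k → R n k = 0)
    (hrec : ∀ n c, R (n + 1) c = ∑ j ∈ range (n + 1), R n j * P j c)
    {k N : ℕ} (rows cols : Fin k → ℕ) (hpos : ∀ i, 1 ≤ rows i) (hN : ∀ i, rows i ≤ N) :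
    (Matrix.of R).submatrix rows cols =
      (Matrix.of fun i (l : Fin N) => R (rows i - 1) l) *
        (Matrix.of fun (l : Fin N) j => P l (cols j)) := by
  ext i j
  obtain ⟨n, hn⟩ : ∃ n, rows i = n + 1 := ⟨rows i - 1, by have := hpos i; omega⟩
  rw [Matrix.mul_apply, Matrix.submatrix_apply, hn, Matrix.of_apply, hrec,
    sum_range_succ_mul_eq_sum_range_mul htri (by have := hN i; omega : n < N),
    ← Fin.sum_univ_eq_sum_range]
  simp [hn]

theorem det_submatrix_nonneg_of_row_succ_eq_sum (hP : IsTPOrder r P) (hR00 : R 0 0 = 1)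
    (htri : ∀ n k, n < k → R n k = 0)
    (hrec : ∀ n c, R (n + 1) c = ∑ j ∈ range (n + 1), R n j * P j c) :
    ∀ k, k ≤ r → ∀ rows cols : Fin k → ℕ, StrictMono rows → StrictMono cols →
      0 ≤ ((Matrix.of R).submatrix rows cols).det
  | 0, _, _, _, _, _ => by simp
  | k + 1, hk, rows, cols, hrows, hcols => by
    by_cases h0 : rows 0 = 0
    · rw [det_submatrix_of_rows_zero_eq_zero hR00 htri rows cols hcols h0]
      split_ifs
      · exact det_submatrix_nonneg_of_row_succ_eq_sum hP hR00 htri hrec k (by omega) _ _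
          (hrows.comp Fin.strictMono_succ) (hcols.comp Fin.strictMono_succ)
      · exact le_rfl
    · have hpos : ∀ i, 1 ≤ rows i := fun i => by
        have := hrows.monotone (Fin.zero_le i); omega
      rw [submatrix_eq_mul_of_row_succ_eq_sum htri hrec rows cols hpos
        (fun i => hrows.monotone (Fin.le_last i))]
      refine Matrix.det_mul_nonneg_of_minors_nonneg_s9 _ _ (fun g hg => ?_)
        (fun g hg => hP _ hk _ _ (Fin.val_strictMono.comp hg) hcols)
      exact det_submatrix_nonneg_of_row_succ_eq_sum hP hR00 htri hrec (k + 1) hk _ _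
        (fun i j hij => Nat.sub_lt_sub_right (hpos i) (hrows hij))
        (Fin.val_strictMono.comp hg)
termination_by k _ rows => k + ∑ i, rows i
decreasing_by
  · simp only [Fin.sum_univ_succ rows, Function.comp_apply]
    omega
  · exact Nat.add_lt_add_left
      (sum_lt_sum_of_nonempty univ_nonempty fun i _ => Nat.sub_lt (hpos i) one_pos) _

theorem isTPOrder_of_row_succ_eq_sum (hP : IsTPOrder r P) (hR00 : R 0 0 = 1)
    (htri : ∀ n k, n < k → R n k = 0)
    (hrec : ∀ n c, R (n + 1) c = ∑ j ∈ range (n + 1), R n j * P j c) : IsTPOrder r R :=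
  det_submatrix_nonneg_of_row_succ_eq_sum hP hR00 htri hrec

end RowRecurrence

theorem riordan_row_succ_eq_sum_mul_toeplitz {a z : ℕ → ℝ} {R : ℕ → ℕ → ℝ}
    (hcons : ∀ n, z n = a (n + 1)) (htri : ∀ n k, n < k → R n k = 0)
    (hZ : ∀ n, R (n + 1) 0 = ∑ j ∈ range (n + 1), z j * R n j)
    (hA : ∀ n k, R (n + 1) (k + 1) = ∑ j ∈ range (n + 1), a j * R n (k + j)) (n c : ℕ) :
    R (n + 1) c = ∑ j ∈ range (n + 1), R n j * toeplitz a (j + 1) c := by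
  rcases c with _ | c
  · rw [hZ]
    exact sum_congr rfl fun j _ => by simp [toeplitz, hcons, mul_comm]
  · have hbelow : ∑ j ∈ range c, R n j * toeplitz a (j + 1) (c + 1) = 0 :=
      sum_eq_zero fun j hj => by simp [toeplitz, mem_range.1 hj]
    rw [hA, sum_range_succ_mul_eq_sum_range_mul htri (by omega : n < c + (n + 1)),
      sum_range_add _ c, hbelow, zero_add]
    exact sum_congr rfl fun j _ => by simp [toeplitz, mul_comm]

theorem quasiConsistent_riordan_TPOrder_of_PFOrder_general (a z : ℕ → ℝ)
    (hcons : ∀ n, z n = a (n + 1)) (r : ℕ)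
    (R : ℕ → ℕ → ℝ)
    (hR00 : R 0 0 = 1)
    (htri : ∀ n k, n < k → R n k = 0)
    (hZ : ∀ n, R (n + 1) 0 = ∑ j ∈ Finset.range (n + 1), z j * R n j)
    (hA : ∀ n k, R (n + 1) (k + 1) = ∑ j ∈ Finset.range (n + 1), a j * R n (k + j))
    (hPF : IsPFOrder r a) :
    IsTPOrder r R :=
  isTPOrder_of_row_succ_eq_sum (IsTPOrder.comp_succ_rows hPF) hR00 htri
    (riordan_row_succ_eq_sum_mul_toeplitz hcons htri hZ hA)

theorem quasiConsistent_riordan_TPOrder_of_PFOrder (a z : ℕ → ℝ) (ha : ∀ n, 0 ≤ a n) (hz : ∀ n, 0 ≤ z n)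
    (hcons : ∀ n, z n = a (n + 1)) (r : ℕ) (hr : 1 ≤ r)
    (R : ℕ → ℕ → ℝ)
    (hR00 : R 0 0 = 1)
    (htri : ∀ n k, n < k → R n k = 0)
    (hZ : ∀ n, R (n + 1) 0 = ∑ j ∈ Finset.range (n + 1), z j * R n j)
    (hA : ∀ n k, R (n + 1) (k + 1) = ∑ j ∈ Finset.range (n + 1), a j * R n (k + j))
    (hPF : IsPFOrder r a) :
    IsTPOrder r R :=
  quasiConsistent_riordan_TPOrder_of_PFOrder_general a z hcons r R hR00 htri hZ hA hPF
end

section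
/- Let R = [r_{n,k}] be a consistent Riordan array (Z-sequence equal to the A-sequence) whose A-sequence (a_n) is a nonnegative log-concave sequence. Then the 0th column (r_{n,0})_{n≥0} of R is log-convex. -/
/-!
Log-concavity of `a` makes the lower-triangular Toeplitz matrix `T m d = a (m - d)` totally
positive of order two (TP2: its 2 × 2 minors on increasing rows and columns are nonnegative).
Because `z = a`, every column of the Riordan array, column 0 included, obeys the same
recurrence, so row `n + 1` is row `n` times the production matrix `J m c = T m (c - 1)`,
which is again TP2. By the Cauchy–Binet formula for 2 × 2 minors a TP2 pair of rows stays
TP2 after multiplication by `J`, so any two rows `i ≤ j` of `R` form a TP2 pair. Finally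
`r_{i+1,0} = ∑ₘ r_{i,m} a_m`, and the minors of rows `i, j` on the columns `0, m` give
`r_{i+1,0} r_{j,0} ≤ r_{i,0} r_{j+1,0}`.
-/

open Finset

section TP2

variable {ι κ R : Type*} [CommRing R] [LinearOrder R] [IsStrictOrderedRing R]

theorem sum_sum_nonneg_of_add_swap_nonneg (s : Finset ι) {f : ι → ι → R}
    (hf : ∀ m m', 0 ≤ f m m' + f m' m) : 0 ≤ ∑ m ∈ s, ∑ m' ∈ s, f m m' := by
  have hswap : ∑ m ∈ s, ∑ m' ∈ s, f m' m = ∑ m ∈ s, ∑ m' ∈ s, f m m' := sum_comm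
  have hsym : 0 ≤ ∑ m ∈ s, ∑ m' ∈ s, (f m m' + f m' m) :=
    sum_nonneg fun m _ => sum_nonneg fun m' _ => hf m m'
  simp only [sum_add_distrib, hswap] at hsym
  linarith

variable [LinearOrder ι]

/-- The `2 × ι` matrix with rows `u` and `v` is TP2. -/
def TP2Pair (u v : ι → R) : Prop :=
  ∀ ⦃m m'⦄, m ≤ m' → u m' * v m ≤ u m * v m'

theorem TP2Pair.sum_mul [LinearOrder κ] {u v : ι → R} (huv : TP2Pair u v) (s : Finset ι)
    {P : ι → κ → R} (hP : ∀ ⦃c c'⦄, c ≤ c' → TP2Pair (P · c) (P · c')) :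
    TP2Pair (fun c => ∑ m ∈ s, u m * P m c) (fun c => ∑ m ∈ s, v m * P m c) := by
  intro c c' hc
  rw [← sub_nonneg, sum_mul_sum, sum_mul_sum, ← sum_sub_distrib]
  simp only [← sum_sub_distrib]
  refine sum_sum_nonneg_of_add_swap_nonneg s fun m m' => ?_
  have hminors : u m * P m c * (v m' * P m' c') - u m * P m c' * (v m' * P m' c)
      + (u m' * P m' c * (v m * P m c') - u m' * P m' c' * (v m * P m c))
      = (u m * v m' - u m' * v m) * (P m c * P m' c' - P m' c * P m c') := by ring
  rw [hminors]
  rcases le_total m m' with h | h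
  · exact mul_nonneg (sub_nonneg.2 (huv h)) (sub_nonneg.2 (hP hc h))
  · exact mul_nonneg_of_nonpos_of_nonpos (sub_nonpos.2 (huv h)) (sub_nonpos.2 (hP hc h))

end TP2

section Toeplitz

variable {a : ℕ → ℝ}

theorem mul_le_mul_of_logConcave (hlc : ∀ i j : ℕ, i < j → a i * a (j + 1) ≤ a (i + 1) * a j)
    (i x y : ℕ) : a i * a (i + x + y) ≤ a (i + x) * a (i + y) := by
  wlog hxy : x ≤ y generalizing x y
  · simpa only [add_right_comm, mul_comm] using this y x (by omega)
  induction x generalizing i y with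
  | zero => simp
  | succ x ih =>
    obtain ⟨y, rfl⟩ : ∃ y', y = y' + 1 := ⟨y - 1, by omega⟩
    calc a i * a (i + (x + 1) + (y + 1)) = a i * a (i + x + y + 1 + 1) := by ring_nf
      _ ≤ a (i + 1) * a (i + x + y + 1) := hlc i _ (by omega)
      _ = a (i + 1) * a (i + 1 + x + y) := by ring_nf
      _ ≤ a (i + 1 + x) * a (i + 1 + y) := ih (i + 1) y (by omega)
      _ = a (i + (x + 1)) * a (i + (y + 1)) := by ring_nf

def lowerToeplitz (a : ℕ → ℝ) (m d : ℕ) : ℝ := if d ≤ m then a (m - d) else 0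

theorem lowerToeplitz_nonneg (ha : ∀ n, 0 ≤ a n) (m d : ℕ) : 0 ≤ lowerToeplitz a m d := by
  unfold lowerToeplitz
  split_ifs
  exacts [ha _, le_rfl]

theorem tp2Pair_lowerToeplitz (ha : ∀ n, 0 ≤ a n)
    (hlc : ∀ i j : ℕ, i < j → a i * a (j + 1) ≤ a (i + 1) * a j) {d d' : ℕ} (hd : d ≤ d') :
    TP2Pair (lowerToeplitz a · d) (lowerToeplitz a · d') := by
  intro m m' hm
  beta_reduce
  by_cases hd' : d' ≤ m
  · simp only [lowerToeplitz, if_pos hd', if_pos (hd.trans hd'),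
      if_pos (hd.trans (hd'.trans hm)), if_pos (hd'.trans hm)]
    have key := mul_le_mul_of_logConcave hlc (m - d') (d' - d) (m' - m)
    rwa [show m - d' + (d' - d) + (m' - m) = m' - d by omega,
      show m - d' + (d' - d) = m - d by omega, show m - d' + (m' - m) = m' - d' by omega,
      mul_comm] at key
  · have hzero : lowerToeplitz a m d' = 0 := if_neg hd'
    rw [hzero, mul_zero]
    exact mul_nonneg (lowerToeplitz_nonneg ha _ _) (lowerToeplitz_nonneg ha _ _)

end Toeplitz

section Riordan

variable {a : ℕ → ℝ} {R : ℕ → ℕ → ℝ}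

/-- With `z = a`, column 0 follows the rule of column 1: the truncated `c - 1` is `0` for both. -/
theorem consistent_riordan_succ {z : ℕ → ℝ} (hcons : ∀ n, z n = a n)
    (hZ : ∀ n, R (n + 1) 0 = ∑ j ∈ range (n + 1), z j * R n j)
    (hA : ∀ n k, R (n + 1) (k + 1) = ∑ j ∈ range (n + 1), a j * R n (k + j)) (n c : ℕ) :
    R (n + 1) c = ∑ s ∈ range (n + 1), a s * R n (c - 1 + s) := by
  cases c with
  | zero => simp only [hZ, hcons, zero_tsub, zero_add]
  | succ c => simp only [hA, add_tsub_cancel_right]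

variable (htri : ∀ n k, n < k → R n k = 0)
  (hrec : ∀ n c, R (n + 1) c = ∑ s ∈ range (n + 1), a s * R n (c - 1 + s))
include htri hrec

theorem riordan_succ_eq_sum_mul_lowerToeplitz {n N : ℕ} (hn : n < N) (c : ℕ) :
    R (n + 1) c = ∑ m ∈ range N, R n m * lowerToeplitz a m (c - 1) := by
  have hle : ∀ {m}, R n m ≠ 0 → m ≤ n := fun h => not_lt.1 fun h' => h (htri n _ h')
  rw [hrec]
  refine sum_bij_ne_zero (fun s _ _ => c - 1 + s) ?_ ?_ ?_ ?_
  · intro s _ hs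
    have := hle (right_ne_zero_of_mul hs)
    exact mem_range.2 (by omega)
  · intro _ _ _ _ _ _ h
    omega
  · intro m _ hm
    have hm' := hle (left_ne_zero_of_mul hm)
    have hc : c - 1 ≤ m := by
      by_contra h
      exact right_ne_zero_of_mul hm (if_neg h)
    have hT : lowerToeplitz a m (c - 1) = a (m - (c - 1)) := if_pos hc
    refine ⟨m - (c - 1), mem_range.2 (by omega), ?_, by omega⟩
    rwa [Nat.add_sub_cancel' hc, ← hT, mul_comm]
  · intro s _ _
    simp [lowerToeplitz, mul_comm]

theorem riordan_nonneg (ha : ∀ n, 0 ≤ a n) (h00 : 0 ≤ R 0 0) (n k : ℕ) : 0 ≤ R n k := by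
  induction n generalizing k with
  | zero =>
    rcases k with _ | k
    exacts [h00, (htri 0 (k + 1) k.succ_pos).ge]
  | succ n ih =>
    rw [hrec]
    exact sum_nonneg fun s _ => mul_nonneg (ha s) (ih _)

theorem tp2Pair_riordan_rows (ha : ∀ n, 0 ≤ a n)
    (hlc : ∀ i j : ℕ, i < j → a i * a (j + 1) ≤ a (i + 1) * a j) (h00 : 0 ≤ R 0 0) :
    ∀ {i j}, i ≤ j → TP2Pair (R i) (R j) := by
  intro i
  induction i with
  | zero =>
    intro j _ k l hkl
    rcases l with _ | l
    · rw [Nat.le_zero.1 hkl]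
    · rw [htri 0 (l + 1) l.succ_pos, zero_mul]
      exact mul_nonneg (riordan_nonneg htri hrec ha h00 _ _) (riordan_nonneg htri hrec ha h00 _ _)
  | succ i ih =>
    intro j hij
    obtain ⟨j, rfl⟩ : ∃ j', j = j' + 1 := ⟨j - 1, by omega⟩
    have hrow : ∀ n, n ≤ j →
        R (n + 1) = fun c => ∑ m ∈ range (j + 1), R n m * lowerToeplitz a m (c - 1) :=
      fun n hn => funext (riordan_succ_eq_sum_mul_lowerToeplitz htri hrec (by omega))
    rw [hrow i (by omega), hrow j le_rfl]
    exact (ih (by omega)).sum_mul _ fun c c' hc => tp2Pair_lowerToeplitz ha hlc (by omega)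

end Riordan

theorem consistent_riordan_col0_logConvex_general (a z : ℕ → ℝ) (ha : ∀ n, 0 ≤ a n)
    (hcons : ∀ n, z n = a n)
    (hlogconcave : ∀ i j : ℕ, i < j → a i * a (j + 1) ≤ a (i + 1) * a j)
    (R : ℕ → ℕ → ℝ)
    (hR00 : R 0 0 = 1)
    (htri : ∀ n k, n < k → R n k = 0)
    (hZ : ∀ n, R (n + 1) 0 = ∑ j ∈ Finset.range (n + 1), z j * R n j)
    (hA : ∀ n k, R (n + 1) (k + 1) = ∑ j ∈ Finset.range (n + 1), a j * R n (k + j)) :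
    ∀ i j : ℕ, i < j → R (i + 1) 0 * R j 0 ≤ R i 0 * R (j + 1) 0 := by
  intro i j hij
  have hrec := consistent_riordan_succ hcons hZ hA
  have hrows : TP2Pair (R i) (R j) :=
    tp2Pair_riordan_rows htri hrec ha hlogconcave (hR00 ▸ zero_le_one) hij.le
  have hcol0 : ∀ n, n ≤ j → R (n + 1) 0 = ∑ m ∈ range (j + 1), R n m * a m := fun n hn => by
    simp [riordan_succ_eq_sum_mul_lowerToeplitz htri hrec (Nat.lt_succ_of_le hn), lowerToeplitz]
  rw [hcol0 i hij.le, hcol0 j le_rfl, sum_mul, mul_sum]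
  refine sum_le_sum fun m _ => ?_
  calc R i m * a m * R j 0 = a m * (R i m * R j 0) := by ring
    _ ≤ a m * (R i 0 * R j m) := mul_le_mul_of_nonneg_left (hrows m.zero_le) (ha m)
    _ = R i 0 * (R j m * a m) := by ring

theorem consistent_riordan_col0_logConvex (a z : ℕ → ℝ) (ha : ∀ n, 0 ≤ a n) (hz : ∀ n, 0 ≤ z n)
    (hcons : ∀ n, z n = a n)
    (hlogconcave : ∀ i j : ℕ, i < j → a i * a (j + 1) ≤ a (i + 1) * a j)
    (R : ℕ → ℕ → ℝ)
    (hR00 : R 0 0 = 1)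
    (htri : ∀ n k, n < k → R n k = 0)
    (hZ : ∀ n, R (n + 1) 0 = ∑ j ∈ Finset.range (n + 1), z j * R n j)
    (hA : ∀ n k, R (n + 1) (k + 1) = ∑ j ∈ Finset.range (n + 1), a j * R n (k + j)) :
    ∀ i j : ℕ, i < j → R (i + 1) 0 * R j 0 ≤ R i 0 * R (j + 1) 0 :=
  consistent_riordan_col0_logConvex_general a z ha hcons hlogconcave R hR00 htri hZ hA
end

section
/- Let R = [r_{n,k}] be a consistent Riordan array (Z-sequence equal to the A-sequence) whose A-sequence (a_n) is a nonnegative log-concave sequence. Then for every n, the nth row r_{n,0}, r_{n,1}, …, r_{n,n} of R is log-concave, i.e., r_{n,k}² ≥ r_{n,k-1} r_{n,k+1} for 1 ≤ k ≤ n−1, and moreover all entries r_{n,k} are nonnegative. -/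
/-!
By induction on `n`, every row `k ↦ r_{n,k}` is nonnegative, nonincreasing and log-concave in the
strong sense `c_i c_{j+1} ≤ c_{i+1} c_j` for `i < j` (which forbids internal zeros). Because `z = a`,
row `n + 1` is the correlation `u_k = ∑_p a_p r_{n,k+p}` shifted right by one place, with `u_0`
duplicated in front. For the correlation, `u_i u_{j+1} - u_{i+1} u_j` expands into a double sum
over `(x, y)`; pairing `(x, y)` with `(y, x)` turns each pair into the product of a `2 × 2` minor of
`a` (nonnegative, by log-concavity of `a`) and a `2 × 2` minor of row `n` (nonpositive, by its
log-concavity), so the whole sum is nonpositive.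
-/

open Finset

def LogConcaveSeq (c : ℕ → ℝ) : Prop :=
  ∀ i j, i < j → c i * c (j + 1) ≤ c (i + 1) * c j

def shiftSeq (a : ℕ → ℝ) : ℕ → ℝ
  | 0 => 0
  | p + 1 => a p

def correlation (a t : ℕ → ℝ) (N k : ℕ) : ℝ :=
  ∑ p ∈ range N, a p * t (k + p)

theorem Finset.sum_sum_nonpos_of_add_swap_nonpos {ι : Type*} (s : Finset ι) (f : ι → ι → ℝ)
    (hf : ∀ x y, f x y + f y x ≤ 0) : ∑ x ∈ s, ∑ y ∈ s, f x y ≤ 0 := by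
  have hswap : ∑ x ∈ s, ∑ y ∈ s, f x y = ∑ x ∈ s, ∑ y ∈ s, f y x := sum_comm
  have hpair : ∑ x ∈ s, ∑ y ∈ s, (f x y + f y x) ≤ 0 :=
    sum_nonpos fun x _ => sum_nonpos fun y _ => hf x y
  simp only [sum_add_distrib] at hpair
  linarith

namespace LogConcaveSeq

variable {a c : ℕ → ℝ}

theorem mul_le_mul_add (hc : LogConcaveSeq c) {p r : ℕ} (hpr : p ≤ r) (d : ℕ) :
    c p * c (r + d) ≤ c (p + d) * c r := by
  induction d generalizing p with
  | zero => simp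
  | succ d ih =>
    rcases hpr.eq_or_lt with rfl | hlt
    · rw [mul_comm]
    · calc c p * c (r + (d + 1)) ≤ c (p + 1) * c (r + d) := hc p (r + d) (by omega)
        _ ≤ c (p + 1 + d) * c r := ih hlt
        _ = c (p + (d + 1)) * c r := by rw [add_right_comm, add_assoc]

theorem mul_le_mul_of_le (hc : LogConcaveSeq c) {i j x y : ℕ} (hij : i ≤ j) (hxy : x ≤ y) :
    c (i + x) * c (j + y) ≤ c (i + y) * c (j + x) := by
  obtain ⟨d, rfl⟩ := Nat.exists_eq_add_of_le hxy
  simpa only [add_assoc, add_comm d x] using hc.mul_le_mul_add (by omega : i + x ≤ j + x) d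

theorem shiftSeq_mul_le (hlc : LogConcaveSeq a) (ha : 0 ≤ a) {x y : ℕ} (hxy : x ≤ y) :
    shiftSeq a x * a y ≤ a x * shiftSeq a y := by
  match x, y with
  | 0, 0 => simp [shiftSeq]
  | 0, y + 1 => simpa [shiftSeq] using mul_nonneg (ha 0) (ha y)
  | x + 1, y + 1 =>
    rcases (Nat.succ_le_succ_iff.1 hxy).eq_or_lt with rfl | h
    · simp [shiftSeq, mul_comm]
    · exact hlc x y h

end LogConcaveSeq

theorem logConcaveSeq_correlation {a t : ℕ → ℝ} {N : ℕ} (ha : 0 ≤ a) (hac : LogConcaveSeq a)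
    (htc : LogConcaveSeq t) (ht : ∀ m, N ≤ m → t m = 0) : LogConcaveSeq (correlation a t N) := by
  intro i j hij
  have hext : ∀ k, correlation a t N k = ∑ p ∈ range (N + 1), a p * t (k + p) := fun k => by
    rw [sum_range_succ, ht _ (by omega), mul_zero, add_zero, correlation]
  have hshift : ∀ k, correlation a t N (k + 1) = ∑ p ∈ range (N + 1), shiftSeq a p * t (k + p) :=
    fun k => by
      rw [sum_range_succ', correlation]
      simp only [shiftSeq, zero_mul, add_zero, add_right_comm k 1, add_assoc]
  set f : ℕ → ℕ → ℝ := fun x y => (a x * shiftSeq a y - shiftSeq a x * a y) * (t (i + x) * t (j + y))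
  have hexpand : correlation a t N i * correlation a t N (j + 1)
      - correlation a t N (i + 1) * correlation a t N j
      = ∑ x ∈ range (N + 1), ∑ y ∈ range (N + 1), f x y := by
    rw [hext i, hext j, hshift i, hshift j, sum_mul_sum, sum_mul_sum]
    simp only [f, ← sum_sub_distrib]
    exact sum_congr rfl fun x _ => sum_congr rfl fun y _ => by ring
  have hpair : ∀ x y, f x y + f y x ≤ 0 := by
    intro x y
    wlog hxy : x ≤ y generalizing x y
    · rw [add_comm]
      exact this y x (le_of_not_ge hxy)
    have hfactor : f x y + f y x = (a x * shiftSeq a y - shiftSeq a x * a y)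
        * (t (i + x) * t (j + y) - t (i + y) * t (j + x)) := by
      simp only [f]
      ring
    rw [hfactor]
    exact mul_nonpos_of_nonneg_of_nonpos (sub_nonneg.2 (hac.shiftSeq_mul_le ha hxy))
      (sub_nonpos.2 (htc.mul_le_mul_of_le hij.le hxy))
  linarith [sum_sum_nonpos_of_add_swap_nonpos (range (N + 1)) f hpair]

theorem correlation_nonneg {a t : ℕ → ℝ} (ha : 0 ≤ a) (ht : 0 ≤ t) (N : ℕ) :
    0 ≤ correlation a t N :=
  fun _ => sum_nonneg fun p _ => mul_nonneg (ha p) (ht _)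

theorem antitone_correlation {a t : ℕ → ℝ} (ha : 0 ≤ a) (ht : Antitone t) (N : ℕ) :
    Antitone (correlation a t N) :=
  fun _ _ hkl => sum_le_sum fun p _ => mul_le_mul_of_nonneg_left (ht (by omega)) (ha p)

theorem LogConcaveSeq.comp_sub_one {u : ℕ → ℝ} (hu : LogConcaveSeq u) (h0 : 0 ≤ u)
    (hmono : Antitone u) : LogConcaveSeq (fun k => u (k - 1)) := by
  rintro (_ | i) (_ | j) hij
  · omega
  · simpa using mul_le_mul_of_nonneg_left (hmono j.le_succ) (h0 0)
  · omega
  · exact hu i j (by omega)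

theorem nonneg_antitone_logConcaveSeq_of_succ_eq_zero {c : ℕ → ℝ} (h0 : 0 ≤ c 0)
    (hc : ∀ k, c (k + 1) = 0) : 0 ≤ c ∧ Antitone c ∧ LogConcaveSeq c := by
  have hnonneg : 0 ≤ c := by
    rintro (_ | k)
    · exact h0
    · exact (hc k).ge
  refine ⟨hnonneg, antitone_nat_of_succ_le fun k => ?_, fun i j _ => ?_⟩
  · simpa [hc] using hnonneg k
  · simp [hc]

theorem nonneg_antitone_logConcaveSeq_correlation_sub_one {a t : ℕ → ℝ} {N : ℕ} (ha : 0 ≤ a)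
    (hac : LogConcaveSeq a) (ht : 0 ≤ t ∧ Antitone t ∧ LogConcaveSeq t)
    (hsupp : ∀ m, N ≤ m → t m = 0) :
    0 ≤ (fun k => correlation a t N (k - 1)) ∧ Antitone (fun k => correlation a t N (k - 1)) ∧
      LogConcaveSeq (fun k => correlation a t N (k - 1)) := by
  obtain ⟨hnonneg, hmono, hlc⟩ := ht
  have hcorr := logConcaveSeq_correlation ha hac hlc hsupp
  exact ⟨fun k => correlation_nonneg ha hnonneg N (k - 1),
    (antitone_correlation ha hmono N).comp_monotone fun _ _ h => Nat.sub_le_sub_right h 1,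
    hcorr.comp_sub_one (correlation_nonneg ha hnonneg N) (antitone_correlation ha hmono N)⟩

theorem consistent_riordan_rows_logConcave_general (a z : ℕ → ℝ) (ha : ∀ n, 0 ≤ a n)
    (hcons : ∀ n, z n = a n)
    (hlogconcave : ∀ i j : ℕ, i < j → a i * a (j + 1) ≤ a (i + 1) * a j)
    (R : ℕ → ℕ → ℝ)
    (hR00 : R 0 0 = 1)
    (htri : ∀ n k, n < k → R n k = 0)
    (hZ : ∀ n, R (n + 1) 0 = ∑ j ∈ Finset.range (n + 1), z j * R n j)
    (hA : ∀ n k, R (n + 1) (k + 1) = ∑ j ∈ Finset.range (n + 1), a j * R n (k + j)) :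
    (∀ n k : ℕ, 0 ≤ R n k) ∧
      ∀ n k : ℕ, 1 ≤ k → k + 1 ≤ n → R n (k - 1) * R n (k + 1) ≤ R n k ^ 2 := by
  -- `z = a` gives `r_{n+1,0} = r_{n+1,1}`, which `k - 1` encodes through `0 - 1 = 0`.
  have hstep : ∀ n, R (n + 1) = fun k => correlation a (R n) (n + 1) (k - 1) := by
    intro n
    funext k
    cases k with
    | zero => simp only [hZ, hcons, correlation, zero_tsub, zero_add]
    | succ k => exact hA n k
  have hrows : ∀ n, 0 ≤ R n ∧ Antitone (R n) ∧ LogConcaveSeq (R n) := by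
    intro n
    induction n with
    | zero =>
      exact nonneg_antitone_logConcaveSeq_of_succ_eq_zero (hR00 ▸ zero_le_one)
        fun k => htri 0 (k + 1) k.succ_pos
    | succ n ih =>
      rw [hstep]
      exact nonneg_antitone_logConcaveSeq_correlation_sub_one ha hlogconcave ih (htri n)
  refine ⟨fun n => (hrows n).1, fun n k hk _ => ?_⟩
  have h := (hrows n).2.2 (k - 1) k (by omega)
  rwa [Nat.sub_add_cancel hk, ← sq] at h

theorem consistent_riordan_rows_logConcave (a z : ℕ → ℝ) (ha : ∀ n, 0 ≤ a n) (hz : ∀ n, 0 ≤ z n)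
    (hcons : ∀ n, z n = a n)
    (hlogconcave : ∀ i j : ℕ, i < j → a i * a (j + 1) ≤ a (i + 1) * a j)
    (R : ℕ → ℕ → ℝ)
    (hR00 : R 0 0 = 1)
    (htri : ∀ n k, n < k → R n k = 0)
    (hZ : ∀ n, R (n + 1) 0 = ∑ j ∈ Finset.range (n + 1), z j * R n j)
    (hA : ∀ n k, R (n + 1) (k + 1) = ∑ j ∈ Finset.range (n + 1), a j * R n (k + j)) :
    (∀ n k : ℕ, 0 ≤ R n k) ∧
      ∀ n k : ℕ, 1 ≤ k → k + 1 ≤ n → R n (k - 1) * R n (k + 1) ≤ R n k ^ 2 :=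
  consistent_riordan_rows_logConcave_general a z ha hcons hlogconcave R hR00 htri hZ hA
end

section
/- Let R = [r_{n,k}] be a quasi-consistent Riordan array (z_n = a_{n+1} for all n) whose A-sequence (a_n) is a nonnegative log-concave sequence. Then the 0th column (r_{n,0})_{n≥0} of R is log-convex. -/
/-!
Quasi-consistency makes the `Z`-column continue the Toeplitz pattern of the `A`-columns, so the
rows of `R` obey `r_{n+1,k} = ∑ᵢ r_{n,i} a_{i+1-k}`. Log-concavity of `(a_n)` makes this
production matrix TP₂, so by Cauchy–Binet for `2 × 2` minors each row dominates the previous one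
in the likelihood-ratio order. Applying the recurrence once more in column `0` gives
`r_{n+1,0}² ≤ r_{n,0} r_{n+2,0}`, and these consecutive inequalities chain to log-convexity.
-/

open Finset

/-- `x ≤ y` in the likelihood-ratio order: `y / x` is nondecreasing, cross-multiplied so that
zero entries are allowed. -/
def LikelihoodRatioLE {κ : Type*} [LinearOrder κ] (x y : κ → ℝ) : Prop :=
  ∀ ⦃k l : κ⦄, k < l → y k * x l ≤ x k * y l

namespace LikelihoodRatioLE

variable {ι κ : Type*} [LinearOrder ι] [LinearOrder κ] {x y : ι → ℝ}

theorem minor_mul_minor_nonneg (hxy : LikelihoodRatioLE x y) {P : ι → κ → ℝ}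
    (hP : ∀ ⦃i j⦄, i < j → LikelihoodRatioLE (P i) (P j)) {k l : κ} (hkl : k < l) (i j : ι) :
    0 ≤ (x i * y j - y i * x j) * (P i k * P j l - P j k * P i l) := by
  rcases lt_trichotomy i j with hij | rfl | hji
  · exact mul_nonneg (sub_nonneg.2 (hxy hij)) (sub_nonneg.2 (hP hij hkl))
  · simp [mul_comm]
  · have h₁ := hxy hji
    have h₂ := hP hji hkl
    exact mul_nonneg_of_nonpos_of_nonpos (by linarith [mul_comm (x i) (y j)])
      (by linarith [mul_comm (P j k) (P i l)])

theorem sum_mul (hxy : LikelihoodRatioLE x y) {P : ι → κ → ℝ}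
    (hP : ∀ ⦃i j⦄, i < j → LikelihoodRatioLE (P i) (P j)) (s : Finset ι) :
    LikelihoodRatioLE (fun k ↦ ∑ i ∈ s, x i * P i k) (fun k ↦ ∑ i ∈ s, y i * P i k) := by
  intro k l hkl
  set F : ι → ι → ℝ := fun i j ↦ (x i * y j - y i * x j) * (P i k * P j l)
  have hsymm : 0 ≤ ∑ i ∈ s, ∑ j ∈ s, (F i j + F j i) :=
    sum_nonneg fun i _ ↦ sum_nonneg fun j _ ↦
      (minor_mul_minor_nonneg hxy hP hkl i j).trans_eq (by simp only [F]; ring)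
  have hF : ∑ i ∈ s, ∑ j ∈ s, F i j =
      (∑ i ∈ s, x i * P i k) * (∑ j ∈ s, y j * P j l)
        - (∑ i ∈ s, y i * P i k) * (∑ j ∈ s, x j * P j l) := by
    simp only [sum_mul_sum, ← sum_sub_distrib, F]
    exact sum_congr rfl fun i _ ↦ sum_congr rfl fun j _ ↦ by ring
  rw [← sub_nonneg, ← hF]
  simp only [sum_add_distrib] at hsymm
  rw [sum_comm (f := fun i j ↦ F j i)] at hsymm
  linarith

theorem mul_sum_le (hxy : LikelihoodRatioLE x y) {w : ι → ℝ} (hw : ∀ i, 0 ≤ w i) {k : ι}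
    {s : Finset ι} (hs : ∀ i ∈ s, k ≤ i) :
    y k * ∑ i ∈ s, x i * w i ≤ x k * ∑ i ∈ s, y i * w i := by
  simp only [mul_sum]
  refine sum_le_sum fun i hi ↦ ?_
  rcases (hs i hi).eq_or_lt with rfl | hki
  · rw [mul_left_comm]
  · simpa only [mul_assoc] using mul_le_mul_of_nonneg_right (hxy hki) (hw i)

end LikelihoodRatioLE

theorem logConvex_of_sq_le {c : ℕ → ℝ} (hc : ∀ n, 0 ≤ c n)
    (hsq : ∀ n, c (n + 1) * c (n + 1) ≤ c n * c (n + 2)) {i j : ℕ} (hij : i ≤ j) :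
    c (i + 1) * c j ≤ c i * c (j + 1) := by
  induction j, hij using Nat.le_induction with
  | base => rw [mul_comm]
  | succ j _ ih =>
    rcases (hc (j + 1)).eq_or_lt with h | hpos
    · rw [← h, mul_zero]
      exact mul_nonneg (hc i) (hc _)
    · refine le_of_mul_le_mul_right ?_ hpos
      nlinarith [mul_le_mul_of_nonneg_right ih (hc (j + 2)),
        mul_le_mul_of_nonneg_left (hsq j) (hc (i + 1))]

section RowRecurrence

variable {P R : ℕ → ℕ → ℝ}

theorem nonneg_of_row_succ_eq_sum (hP : ∀ i k, 0 ≤ P i k) (hR0 : ∀ k, 0 ≤ R 0 k)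
    (hrow : ∀ n M, n + 1 ≤ M → ∀ k, R (n + 1) k = ∑ i ∈ range M, R n i * P i k) (n k : ℕ) :
    0 ≤ R n k := by
  induction n generalizing k with
  | zero => exact hR0 k
  | succ n ih =>
    rw [hrow n (n + 1) le_rfl]
    exact sum_nonneg fun i _ ↦ mul_nonneg (ih i) (hP i k)

theorem likelihoodRatioLE_row_succ (hP : ∀ ⦃i j⦄, i < j → LikelihoodRatioLE (P i) (P j))
    (hrow : ∀ n M, n + 1 ≤ M → ∀ k, R (n + 1) k = ∑ i ∈ range M, R n i * P i k)
    (h01 : LikelihoodRatioLE (R 0) (R 1)) (n : ℕ) :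
    LikelihoodRatioLE (R n) (R (n + 1)) := by
  induction n with
  | zero => exact h01
  | succ n ih =>
    have hn : R (n + 1) = fun k ↦ ∑ i ∈ range (n + 2), R n i * P i k :=
      funext (hrow n (n + 2) (by omega))
    have hn' : R (n + 2) = fun k ↦ ∑ i ∈ range (n + 2), R (n + 1) i * P i k :=
      funext (hrow (n + 1) (n + 2) le_rfl)
    have := ih.sum_mul hP (range (n + 2))
    rwa [← hn, ← hn'] at this

theorem col_zero_sq_le (hP : ∀ i k, 0 ≤ P i k)
    (hrow : ∀ n M, n + 1 ≤ M → ∀ k, R (n + 1) k = ∑ i ∈ range M, R n i * P i k)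
    {n : ℕ} (hn : LikelihoodRatioLE (R n) (R (n + 1))) :
    R (n + 1) 0 * R (n + 1) 0 ≤ R n 0 * R (n + 2) 0 := by
  have := hn.mul_sum_le (fun i ↦ hP i 0) (s := range (n + 2)) fun i _ ↦ Nat.zero_le i
  rwa [← hrow n (n + 2) (by omega), ← hrow (n + 1) (n + 2) le_rfl] at this

end RowRecurrence

section LogConcave

variable {a : ℕ → ℝ}

theorem mul_le_mul_of_logConcave_s14 (hlc : ∀ i j : ℕ, i < j → a i * a (j + 1) ≤ a (i + 1) * a j)
    {p q r s : ℕ} (hrp : r ≤ p) (hrq : r ≤ q) (hsum : r + s = p + q) :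
    a r * a s ≤ a p * a q := by
  obtain ⟨d, rfl⟩ := Nat.exists_eq_add_of_le hrp
  induction d generalizing r s with
  | zero =>
    obtain rfl : s = q := by omega
    rfl
  | succ d ih =>
    rcases hrq.eq_or_lt with rfl | hrq
    · obtain rfl : s = r + (d + 1) := by omega
      rw [mul_comm]
    · rw [← add_assoc, add_right_comm]
      calc a r * a s ≤ a (r + 1) * a (s - 1) := by
            simpa only [Nat.sub_add_cancel (by omega : 1 ≤ s)] using hlc r (s - 1) (by omega)
        _ ≤ a (r + 1 + d) * a q := ih (by omega) (by omega) (by omega)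

def riordanProduction (a : ℕ → ℝ) (i k : ℕ) : ℝ :=
  if k ≤ i + 1 then a (i + 1 - k) else 0

theorem riordanProduction_nonneg (ha : ∀ n, 0 ≤ a n) (i k : ℕ) : 0 ≤ riordanProduction a i k := by
  unfold riordanProduction
  split_ifs
  exacts [ha _, le_rfl]

theorem riordanProduction_likelihoodRatioLE (ha : ∀ n, 0 ≤ a n)
    (hlc : ∀ i j : ℕ, i < j → a i * a (j + 1) ≤ a (i + 1) * a j) ⦃i j : ℕ⦄ (hij : i < j) :
    LikelihoodRatioLE (riordanProduction a i) (riordanProduction a j) := by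
  intro k l hkl
  by_cases hli : l ≤ i + 1
  · simp only [riordanProduction, if_pos hli, if_pos (by omega : k ≤ i + 1),
      if_pos (by omega : k ≤ j + 1), if_pos (by omega : l ≤ j + 1)]
    rw [mul_comm]
    exact mul_le_mul_of_logConcave_s14 hlc (by omega) (by omega) (by omega)
  · rw [show riordanProduction a i l = 0 from if_neg hli, mul_zero]
    exact mul_nonneg (riordanProduction_nonneg ha _ _) (riordanProduction_nonneg ha _ _)

end LogConcave

section Riordan

variable {a z : ℕ → ℝ} {R : ℕ → ℕ → ℝ}

theorem riordan_row_succ_eq_sum (hcons : ∀ n, z n = a (n + 1))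
    (htri : ∀ n k, n < k → R n k = 0)
    (hZ : ∀ n, R (n + 1) 0 = ∑ j ∈ range (n + 1), z j * R n j)
    (hA : ∀ n k, R (n + 1) (k + 1) = ∑ j ∈ range (n + 1), a j * R n (k + j))
    {n M : ℕ} (hM : n + 1 ≤ M) (k : ℕ) :
    R (n + 1) k = ∑ i ∈ range M, R n i * riordanProduction a i k := by
  have htrunc : ∀ M', n + 1 ≤ M' → ∑ i ∈ range M', R n i * riordanProduction a i k =
      ∑ i ∈ range (n + 1), R n i * riordanProduction a i k := fun M' hM' ↦
    eventually_constant_sum (fun i hi ↦ by rw [htri n i (by omega), zero_mul]) hM'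
  rw [htrunc M hM]
  cases k with
  | zero =>
    rw [hZ]
    exact sum_congr rfl fun i _ ↦ by rw [riordanProduction, if_pos (by omega), hcons, mul_comm]; rfl
  | succ k =>
    have hlow : ∑ i ∈ range k, R n i * riordanProduction a i (k + 1) = 0 :=
      sum_eq_zero fun i hi ↦ by
        rw [riordanProduction, if_neg (by simp only [mem_range] at hi; omega), mul_zero]
    rw [← htrunc (k + (n + 1)) (by omega), sum_range_add, hlow, zero_add, hA]
    exact sum_congr rfl fun j _ ↦ by
      rw [riordanProduction, if_pos (by omega), mul_comm]
      congr 2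
      omega

end Riordan

theorem quasiConsistent_riordan_col0_logConvex_general (a z : ℕ → ℝ) (ha : ∀ n, 0 ≤ a n)
    (hcons : ∀ n, z n = a (n + 1))
    (hlogconcave : ∀ i j : ℕ, i < j → a i * a (j + 1) ≤ a (i + 1) * a j)
    (R : ℕ → ℕ → ℝ)
    (hR00 : R 0 0 = 1)
    (htri : ∀ n k, n < k → R n k = 0)
    (hZ : ∀ n, R (n + 1) 0 = ∑ j ∈ Finset.range (n + 1), z j * R n j)
    (hA : ∀ n k, R (n + 1) (k + 1) = ∑ j ∈ Finset.range (n + 1), a j * R n (k + j)) :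
    ∀ i j : ℕ, i < j → R (i + 1) 0 * R j 0 ≤ R i 0 * R (j + 1) 0 := by
  have hrow : ∀ n M, n + 1 ≤ M → ∀ k,
      R (n + 1) k = ∑ i ∈ range M, R n i * riordanProduction a i k :=
    fun _ _ hM k ↦ riordan_row_succ_eq_sum hcons htri hZ hA hM k
  have hP := riordanProduction_nonneg ha
  have hR0 : ∀ k, 0 ≤ R 0 k
    | 0 => hR00 ▸ zero_le_one
    | k + 1 => (htri 0 (k + 1) k.succ_pos).ge
  have hR := nonneg_of_row_succ_eq_sum hP hR0 hrow
  have h01 : LikelihoodRatioLE (R 0) (R 1) := fun k l hkl ↦ by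
    rw [htri 0 l (by omega), mul_zero]
    exact mul_nonneg (hR 0 k) (hR 1 l)
  have hrows :=
    likelihoodRatioLE_row_succ (riordanProduction_likelihoodRatioLE ha hlogconcave) hrow h01
  exact fun i j hij ↦
    logConvex_of_sq_le (fun n ↦ hR n 0) (fun n ↦ col_zero_sq_le hP hrow (hrows n)) hij.le

theorem quasiConsistent_riordan_col0_logConvex (a z : ℕ → ℝ) (ha : ∀ n, 0 ≤ a n) (hz : ∀ n, 0 ≤ z n)
    (hcons : ∀ n, z n = a (n + 1))
    (hlogconcave : ∀ i j : ℕ, i < j → a i * a (j + 1) ≤ a (i + 1) * a j)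
    (R : ℕ → ℕ → ℝ)
    (hR00 : R 0 0 = 1)
    (htri : ∀ n k, n < k → R n k = 0)
    (hZ : ∀ n, R (n + 1) 0 = ∑ j ∈ Finset.range (n + 1), z j * R n j)
    (hA : ∀ n k, R (n + 1) (k + 1) = ∑ j ∈ Finset.range (n + 1), a j * R n (k + j)) :
    ∀ i j : ℕ, i < j → R (i + 1) 0 * R j 0 ≤ R i 0 * R (j + 1) 0 :=
  quasiConsistent_riordan_col0_logConvex_general a z ha hcons hlogconcave R hR00 htri hZ hA
end

section
/- Let R = [r_{n,k}] be a quasi-consistent Riordan array (z_n = a_{n+1} for all n) whose A-sequence (a_n) is a nonnegative log-concave sequence. Then for every n, the nth row r_{n,0}, r_{n,1}, …, r_{n,n} of R is log-concave, i.e., r_{n,k}² ≥ r_{n,k-1} r_{n,k+1} for 1 ≤ k ≤ n−1, and moreover all entries r_{n,k} are nonnegative. -/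
/-!
Quasi-consistency lets the `Z`-recurrence be read as the `A`-recurrence at `k = 0` with the
convention `r_{n,-1} = 0`, so every row is the cross-correlation
`r_{n+1,k} = ∑ₘ r_{n,m} a_{m+1-k}` of the previous row (extended by zero to `ℤ`) with `a`.
Cross-correlation preserves log-concavity in the strong sense `c_i c_{j+1} ≤ c_{i+1} c_j` (`i < j`):
after shifting the summation index, `c_{s+1} c_t - c_s c_{t+1}` is a double sum over `(x, y)` whose
`(x, y)` and `(y, x)` terms add up to the product of a 2×2 minor of the Toeplitz kernel of `a` and
a 2×2 minor of the row, both nonnegative. Induction on `n` finishes the proof.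
-/

open Finset Function

def IsLogConcave {ι : Type*} [LT ι] [Add ι] [One ι] (c : ι → ℝ) : Prop :=
  ∀ i j, i < j → c i * c (j + 1) ≤ c (i + 1) * c j

noncomputable def extendByZero (f : ℕ → ℝ) : ℤ → ℝ :=
  extend (↑) f 0

@[simp]
theorem extendByZero_natCast (f : ℕ → ℝ) (n : ℕ) : extendByZero f n = f n :=
  Nat.cast_injective.extend_apply f 0 n

theorem extendByZero_of_neg (f : ℕ → ℝ) {t : ℤ} (ht : t < 0) : extendByZero f t = 0 :=
  extend_apply' _ _ _ (by rintro ⟨n, rfl⟩; omega)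

theorem extendByZero_nonneg {f : ℕ → ℝ} (hf : ∀ n, 0 ≤ f n) (t : ℤ) : 0 ≤ extendByZero f t := by
  rcases lt_or_ge t 0 with ht | ht
  · rw [extendByZero_of_neg f ht]
  · lift t to ℕ using ht
    rw [extendByZero_natCast]
    exact hf t

theorem support_extendByZero_subset {f : ℕ → ℝ} {N : ℕ} (hf : ∀ n, N ≤ n → f n = 0) :
    support (extendByZero f) ⊆ (((range N).map Nat.castEmbedding : Finset ℤ) : Set ℤ) := by
  intro t ht
  rcases lt_or_ge t 0 with htneg | htnonneg
  · exact absurd (extendByZero_of_neg f htneg) ht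
  · lift t to ℕ using htnonneg
    rw [mem_support, extendByZero_natCast] at ht
    simpa using not_le.1 (mt (hf t) ht)

theorem Finset.sum_sum_nonneg_of_add_swap_nonneg {ι M : Type*} [AddCommGroup M] [LinearOrder M]
    [IsOrderedAddMonoid M] (s : Finset ι) {f : ι → ι → M} (h : ∀ i j, 0 ≤ f i j + f j i) :
    0 ≤ ∑ i ∈ s, ∑ j ∈ s, f i j := by
  have hpair : 0 ≤ ∑ i ∈ s, ∑ j ∈ s, (f i j + f j i) :=
    sum_nonneg fun i _ => sum_nonneg fun j _ => h i j
  simp only [sum_add_distrib] at hpair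
  rw [sum_comm (f := fun i j => f j i)] at hpair
  by_contra! hneg
  exact hpair.not_gt (add_neg hneg hneg)

namespace IsLogConcave

theorem extendByZero {f : ℕ → ℝ} (hf0 : ∀ n, 0 ≤ f n) (hf : IsLogConcave f) :
    IsLogConcave (extendByZero f) := by
  intro i j hij
  rcases lt_or_ge i 0 with hi | hi
  · rw [extendByZero_of_neg f hi, zero_mul]
    exact mul_nonneg (extendByZero_nonneg hf0 _) (extendByZero_nonneg hf0 _)
  · lift i to ℕ using hi
    lift j to ℕ using by omega
    simp only [← Nat.cast_add_one, extendByZero_natCast]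
    exact hf i j (by omega)

variable {c : ℤ → ℝ}

theorem comp_natCast (hc : IsLogConcave c) : IsLogConcave fun n : ℕ => c n :=
  fun i j hij => by exact_mod_cast hc i j (by exact_mod_cast hij)

theorem comp_sub_const (hc : IsLogConcave c) (r : ℤ) : IsLogConcave fun k => c (k - r) :=
  fun i j hij => by simpa only [sub_add_eq_add_sub] using hc (i - r) (j - r) (by omega)

theorem mul_le_mul_of_add_eq (hc : IsLogConcave c) {p q p' q' : ℤ} (hpq : p ≤ q) (hpp' : p ≤ p')
    (hsum : p + q' = p' + q) : c p * c q' ≤ c p' * c q := by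
  have step : ∀ d : ℕ, ∀ p, p ≤ q → c p * c (q + d) ≤ c (p + d) * c q := by
    intro d
    induction d with
    | zero => intro p _; simp [mul_comm]
    | succ d ih =>
      intro p hpq
      rcases hpq.eq_or_lt with rfl | hlt
      · rw [mul_comm]
      calc c p * c (q + (d + 1 : ℕ)) = c p * c (q + d + 1) := by push_cast; ring_nf
        _ ≤ c (p + 1) * c (q + d) := hc _ _ (by omega)
        _ ≤ c (p + 1 + d) * c q := ih _ (by omega)
        _ = c (p + (d + 1 : ℕ)) * c q := by push_cast; ring_nf
  obtain ⟨d, hd⟩ := Int.eq_ofNat_of_zero_le (sub_nonneg.2 hpp')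
  have := step d p hpq
  rwa [show q + d = q' by omega, show p + d = p' by omega] at this

theorem finsum_mul_comp_sub {A b : ℤ → ℝ} (hA : IsLogConcave A) (hb : IsLogConcave b)
    (hfin : (support b).Finite) : IsLogConcave fun k => ∑ᶠ m, b m * A (m - k) := by
  classical
  intro s t hst
  set S : Finset ℤ := hfin.toFinset ∪ hfin.toFinset.image (· - 1)
  have hsum : ∀ k, ∑ᶠ m, b m * A (m - k) = ∑ m ∈ S, b m * A (m - k) := fun k =>
    finsum_eq_sum_of_support_subset _ fun m hm => by
      simp only [S, coe_union, Set.Finite.coe_toFinset, Set.mem_union]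
      exact Or.inl (support_mul_subset_left _ _ hm)
  have hsum_succ : ∀ k, ∑ᶠ m, b m * A (m - (k + 1)) = ∑ m ∈ S, b (m + 1) * A (m - k) := by
    intro k
    rw [← finsum_comp_equiv (Equiv.addRight 1)]
    simp only [Equiv.coe_addRight, add_sub_add_right_eq_sub]
    refine finsum_eq_sum_of_support_subset _ fun m hm => ?_
    simp only [S, coe_union, coe_image, Set.Finite.coe_toFinset, Set.mem_union, Set.mem_image]
    exact Or.inr ⟨m + 1, support_mul_subset_left (fun i => b (i + 1)) _ hm, add_sub_cancel_right m 1⟩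
  dsimp only
  rw [hsum_succ, hsum_succ, hsum, hsum, ← sub_nonneg, sum_mul_sum, sum_mul_sum, ← sum_sub_distrib]
  simp_rw [← sum_sub_distrib]
  refine S.sum_sum_nonneg_of_add_swap_nonneg fun x y => ?_
  wlog hxy : x ≤ y
  · linarith [this hA hb hfin s t hst hsum hsum_succ y x (le_of_not_ge hxy)]
  have hA' : A (y - s) * A (x - t) ≤ A (x - s) * A (y - t) := by
    have := hA.mul_le_mul_of_add_eq (p := x - t) (q := x - s) (p' := y - t) (q' := y - s)
      (by omega) (by omega) (by ring)
    linarith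
  have hb' : b x * b (y + 1) ≤ b (x + 1) * b y :=
    hb.mul_le_mul_of_add_eq hxy (by omega) (by ring)
  calc (0 : ℝ) ≤ (A (x - s) * A (y - t) - A (y - s) * A (x - t)) *
        (b (x + 1) * b y - b x * b (y + 1)) := mul_nonneg (by linarith) (by linarith)
    _ = _ := by ring

end IsLogConcave

section Riordan

variable {a : ℕ → ℝ} {R : ℕ → ℕ → ℝ}

theorem riordan_nonneg_s15 (ha : ∀ n, 0 ≤ a n) (hR00 : 0 ≤ R 0 0) (htri : ∀ n k, n < k → R n k = 0)
    (hZ : ∀ n, R (n + 1) 0 = ∑ j ∈ range (n + 1), a (j + 1) * R n j)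
    (hA : ∀ n k, R (n + 1) (k + 1) = ∑ j ∈ range (n + 1), a j * R n (k + j)) (n k : ℕ) :
    0 ≤ R n k := by
  induction n generalizing k with
  | zero =>
    rcases k.eq_zero_or_pos with rfl | hk
    · exact hR00
    · rw [htri 0 k hk]
  | succ n ih =>
    cases k with
    | zero => rw [hZ]; exact sum_nonneg fun j _ => mul_nonneg (ha _) (ih _)
    | succ k => rw [hA]; exact sum_nonneg fun j _ => mul_nonneg (ha _) (ih _)

theorem riordan_succ_eq_finsum (htri : ∀ n k, n < k → R n k = 0)
    (hZ : ∀ n, R (n + 1) 0 = ∑ j ∈ range (n + 1), a (j + 1) * R n j)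
    (hA : ∀ n k, R (n + 1) (k + 1) = ∑ j ∈ range (n + 1), a j * R n (k + j)) (n k : ℕ) :
    R (n + 1) k = ∑ᶠ m : ℤ, extendByZero (R n) m * extendByZero a (m - (k - 1)) := by
  cases k with
  | zero =>
    have hsupp := support_extendByZero_subset (N := n + 1) (htri n)
    rw [hZ, finsum_eq_sum_of_support_subset _ ((support_mul_subset_left _ _).trans hsupp), sum_map]
    refine sum_congr rfl fun j _ => ?_
    rw [Nat.castEmbedding_apply, Nat.cast_zero, zero_sub, sub_neg_eq_add, ← Nat.cast_add_one,
      extendByZero_natCast, extendByZero_natCast, mul_comm]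
  | succ k =>
    have hsupp : support (fun j : ℤ => extendByZero (R n) (j + k) * extendByZero a j) ⊆
        (((range (n + 1)).map Nat.castEmbedding : Finset ℤ) : Set ℤ) := by
      intro j hj
      obtain ⟨hR, ha⟩ := mul_ne_zero_iff.1 hj
      lift j to ℕ using not_lt.1 (mt (extendByZero_of_neg a) ha)
      rw [← Nat.cast_add, extendByZero_natCast] at hR
      have hjk : ¬n < j + k := mt (htri n (j + k)) hR
      exact mem_coe.2 (mem_map_of_mem Nat.castEmbedding (mem_range.2 (by omega)))
    rw [hA, ← finsum_comp_equiv (Equiv.addRight (k : ℤ))]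
    simp only [Equiv.coe_addRight, Nat.cast_add_one, add_sub_cancel_right]
    rw [finsum_eq_sum_of_support_subset _ hsupp, sum_map]
    refine sum_congr rfl fun j _ => ?_
    rw [Nat.castEmbedding_apply, ← Nat.cast_add, extendByZero_natCast, extendByZero_natCast,
      add_comm j k, mul_comm]

theorem riordan_row_isLogConcave (ha : ∀ n, 0 ≤ a n) (hlc : IsLogConcave a) (hR00 : 0 ≤ R 0 0)
    (htri : ∀ n k, n < k → R n k = 0)
    (hZ : ∀ n, R (n + 1) 0 = ∑ j ∈ range (n + 1), a (j + 1) * R n j)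
    (hA : ∀ n k, R (n + 1) (k + 1) = ∑ j ∈ range (n + 1), a j * R n (k + j)) (n : ℕ) :
    IsLogConcave (R n) := by
  induction n with
  | zero =>
    intro i j _
    simp [htri 0 (j + 1) (by omega), htri 0 (i + 1) (by omega)]
  | succ n ih =>
    have hfin : (support (extendByZero (R n))).Finite :=
      (finite_toSet _).subset (support_extendByZero_subset (N := n + 1) (htri n))
    have hrow := ((IsLogConcave.finsum_mul_comp_sub (hlc.extendByZero ha)
      (ih.extendByZero (riordan_nonneg_s15 ha hR00 htri hZ hA n)) hfin).comp_sub_const 1).comp_natCast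
    convert hrow using 1
    funext k
    exact riordan_succ_eq_finsum htri hZ hA n k

end Riordan

theorem quasiConsistent_riordan_rows_logConcave_general (a z : ℕ → ℝ) (ha : ∀ n, 0 ≤ a n)
    (hcons : ∀ n, z n = a (n + 1))
    (hlogconcave : ∀ i j : ℕ, i < j → a i * a (j + 1) ≤ a (i + 1) * a j)
    (R : ℕ → ℕ → ℝ)
    (hR00 : R 0 0 = 1)
    (htri : ∀ n k, n < k → R n k = 0)
    (hZ : ∀ n, R (n + 1) 0 = ∑ j ∈ Finset.range (n + 1), z j * R n j)
    (hA : ∀ n k, R (n + 1) (k + 1) = ∑ j ∈ Finset.range (n + 1), a j * R n (k + j)) :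
    (∀ n k : ℕ, 0 ≤ R n k) ∧
      ∀ n k : ℕ, 1 ≤ k → k + 1 ≤ n → R n (k - 1) * R n (k + 1) ≤ R n k ^ 2 := by
  simp only [hcons] at hZ
  have hR00' : 0 ≤ R 0 0 := hR00 ▸ zero_le_one
  refine ⟨riordan_nonneg_s15 ha hR00' htri hZ hA, fun n k hk _ => ?_⟩
  have h := riordan_row_isLogConcave ha hlogconcave hR00' htri hZ hA n (k - 1) k (by omega)
  rwa [Nat.sub_add_cancel hk, ← sq] at h

theorem quasiConsistent_riordan_rows_logConcave (a z : ℕ → ℝ) (ha : ∀ n, 0 ≤ a n) (hz : ∀ n, 0 ≤ z n)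
    (hcons : ∀ n, z n = a (n + 1))
    (hlogconcave : ∀ i j : ℕ, i < j → a i * a (j + 1) ≤ a (i + 1) * a j)
    (R : ℕ → ℕ → ℝ)
    (hR00 : R 0 0 = 1)
    (htri : ∀ n k, n < k → R n k = 0)
    (hZ : ∀ n, R (n + 1) 0 = ∑ j ∈ Finset.range (n + 1), z j * R n j)
    (hA : ∀ n k, R (n + 1) (k + 1) = ∑ j ∈ Finset.range (n + 1), a j * R n (k + j)) :
    (∀ n k : ℕ, 0 ≤ R n k) ∧
      ∀ n k : ℕ, 1 ≤ k → k + 1 ≤ n → R n (k - 1) * R n (k + 1) ≤ R n k ^ 2 :=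
  quasiConsistent_riordan_rows_logConcave_general a z ha hcons hlogconcave R hR00 htri hZ hA
end
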